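/- arXiv:1502.05146 — 11 statements merged into one kernel-verified Lean document; each statement's English description precedes it below -/
import Mathlib

section
/- Let Γ be a countable structure over an at most countable relational signature and let 𝒞 be the age of Γ. Then 𝒞 has the Ramsey property if and only if Γ → (B)^A_r for all A, B ∈ 𝒞 and all r ∈ ℕ. -/
/-!
Ramsey arrows pass to superstructures: if `C → (B)^A_r` and `C` embeds into `D`, then
`D → (B)^A_r`. Conversely, by compactness: suppose `Γ → (B)^A_r` with `A`, `B` finite, but every
finitely generated substructure carries a bad colouring. The limit of these colourings along an
ultrafilter on the finite subsets of `Γ` refining `atTop` colours the embeddings `A ↪ Γ`; a copy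
of `B` monochromatic for the limit lies in a finite set on which the limit agrees with that set's
bad colouring, which is absurd. In a relational signature finitely generated substructures are
finite, hence belong to the age.
-/

open FirstOrder FirstOrder.Language CategoryTheory

universe u v w

/-- The partition arrow `C → (B)^A_r`. -/
def RamseyArrow (L : FirstOrder.Language.{u, v}) (C B A : Type w)
    [L.Structure C] [L.Structure B] [L.Structure A] (r : ℕ) : Prop :=
  ∀ χ : (A ↪[L] C) → Fin r, ∃ f : B ↪[L] C,
    ∀ e₁ e₂ : A ↪[L] B, χ (f.comp e₁) = χ (f.comp e₂)

/-- The age of `Γ`: the class of all finite structures that embed into `Γ`. -/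
def FinAge (L : FirstOrder.Language.{u, v}) (Γ : Type w) [L.Structure Γ] :
    Set (Bundled.{w} L.Structure) :=
  {A | Finite A ∧ Nonempty (A ↪[L] Γ)}

/-- A class of finite structures has the Ramsey property if for all `A, B` in the class and
all `r` there is `C` in the class with `C → (B)^A_r`. -/
def HasRamseyProperty (L : FirstOrder.Language.{u, v})
    (K : Set (Bundled.{w} L.Structure)) : Prop :=
  ∀ A ∈ K, ∀ B ∈ K, ∀ r : ℕ, ∃ C ∈ K, RamseyArrow L C B A r

namespace RamseyArrow

variable {L : FirstOrder.Language.{u, v}} {A B C D : Type w}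
  [L.Structure A] [L.Structure B] [L.Structure C] [L.Structure D] {r : ℕ}

theorem of_embedding (g : C ↪[L] D) (h : RamseyArrow L C B A r) : RamseyArrow L D B A r := by
  intro χ
  obtain ⟨f, hf⟩ := h (fun e => χ (g.comp e))
  refine ⟨g.comp f, fun e₁ e₂ => ?_⟩
  simpa only [Embedding.comp_assoc] using hf e₁ e₂

theorem exists_fg_substructure [Finite A] [Finite B] (h : RamseyArrow L D B A r) :
    ∃ S : L.Substructure D, S.FG ∧ RamseyArrow L S B A r := by
  by_contra! hfg
  have hbad (S : Finset D) : ¬ RamseyArrow L (Substructure.closure L (S : Set D)) B A r :=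
    hfg _ ⟨S, rfl⟩
  simp only [RamseyArrow, not_forall, not_exists] at hbad
  choose χS hχS using hbad
  obtain ⟨U, hU⟩ : ∃ U : Ultrafilter (Finset D), (U : Filter (Finset D)) ≤ Filter.atTop :=
    ⟨.of _, Ultrafilter.of_le _⟩
  let Sees (e : A ↪[L] D) (c : Fin r) (S : Finset D) : Prop :=
    ∃ he : ∀ a, e a ∈ Substructure.closure L (S : Set D),
      χS S (Embedding.codRestrict _ e he) = c
  have eventually_range_subset {X : Type w} [Finite X] (g : X → D) :
      ∀ᶠ S : Finset D in U, Set.range g ⊆ (S : Set D) := by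
    obtain ⟨S₀, hS₀⟩ := (Set.finite_range g).exists_finset_coe
    filter_upwards [hU (Filter.eventually_ge_atTop S₀)] with S hS
    exact hS₀ ▸ Finset.coe_subset.2 hS
  have limit_colour (e : A ↪[L] D) : ∃ c, ∀ᶠ S in (U : Filter (Finset D)), Sees e c S := by
    refine Ultrafilter.eventually_exists_iff.1 ?_
    filter_upwards [eventually_range_subset e] with S hS
    have he : ∀ a, e a ∈ Substructure.closure L (S : Set D) :=
      fun a => Substructure.subset_closure (hS (Set.mem_range_self a))
    exact ⟨_, he, rfl⟩
  choose χ hχ using limit_colour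
  obtain ⟨f, hf⟩ := h χ
  have : Finite (A ↪[L] B) := .of_injective _ DFunLike.coe_injective
  obtain ⟨S, hSf, hSχ⟩ := ((eventually_range_subset f).and
    (Filter.eventually_all.2 fun e => hχ (f.comp e))).exists
  have hfS : ∀ b, f b ∈ Substructure.closure L (S : Set D) :=
    fun b => Substructure.subset_closure (hSf (Set.mem_range_self b))
  obtain ⟨e₁, e₂, hne⟩ := hχS S (Embedding.codRestrict _ f hfS)
  have colour_eq (e : A ↪[L] B) :
      χS S ((Embedding.codRestrict _ f hfS).comp e) = χ (f.comp e) := by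
    obtain ⟨_, hc⟩ := hSχ e
    rwa [Embedding.comp_codRestrict]
  exact hne (by rw [colour_eq, colour_eq, hf])

end RamseyArrow

theorem stmt1_general (L : FirstOrder.Language.{u, v}) [L.IsRelational]
    (Γ : Type w) [L.Structure Γ] :
    HasRamseyProperty L (FinAge L Γ) ↔
      ∀ A ∈ FinAge L Γ, ∀ B ∈ FinAge L Γ, ∀ r : ℕ, RamseyArrow L Γ B A r := by
  constructor
  · intro h A hA B hB r
    obtain ⟨C, ⟨-, ⟨g⟩⟩, hC⟩ := h A hA B hB r
    exact hC.of_embedding g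
  · intro h A hA B hB r
    have := hA.1
    have := hB.1
    obtain ⟨S, hS, hSB⟩ := (h A hA B hB r).exists_fg_substructure
    exact ⟨Bundled.of S, ⟨hS.finite, ⟨S.subtype⟩⟩, hSB⟩

/-- For a countable structure `Γ` over an at most countable relational signature, the age of `Γ`
has the Ramsey property if and only if `Γ → (B)^A_r` for all `A, B` in the age and all `r`. -/
theorem stmt1 (L : FirstOrder.Language.{u, v}) [L.IsRelational]
    [Countable (Σ n, L.Relations n)]
    (Γ : Type w) [L.Structure Γ] [Countable Γ] :
    HasRamseyProperty L (FinAge L Γ) ↔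
      ∀ A ∈ FinAge L Γ, ∀ B ∈ FinAge L Γ, ∀ r : ℕ, RamseyArrow L Γ B A r :=
  stmt1_general L Γ
end

section
/- Let A be a finite structure over a relational signature. Then for every structure C with the same signature there exists a colouring χ from the set of embeddings of A into C to the set Aut(A) of automorphisms of A such that for every embedding f of A into C, the map h ↦ χ(f ∘ h) is a bijection from Aut(A) onto Aut(A); in particular, for every embedding f of A into C, the set {χ(f ∘ h) : h an embedding of A into A} has exactly |Aut(A)| elements. (Hence in any class of finite structures the Ramsey degree of A is at least |Aut(A)|.) -/
open FirstOrder FirstOrder.Language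

universe u v w w'

/-- A bijective first-order embedding is an equivalence. -/
noncomputable def FirstOrder.Language.Embedding.toEquivOfBijective {L : FirstOrder.Language.{u, v}}
    {M : Type w} {N : Type w'} [L.Structure M] [L.Structure N]
    (f : M ↪[L] N) (hf : Function.Bijective f) : M ≃[L] N where
  toEquiv := Equiv.ofBijective f hf
  map_fun' := f.map_fun'
  map_rel' := f.map_rel'

/-- For every finite structure `A` over a relational signature and every structure `C` with the
same signature, there is a colouring `χ` of the embeddings of `A` into `C` by automorphisms of
`A` such that for every embedding `f` of `A` into `C` the map `h ↦ χ(f ∘ h)` is a bijection of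
`Aut(A)`; in particular the set of colours realised on any copy of `A` in `C` has exactly
`|Aut(A)|` elements. -/
theorem stmt2 (L : FirstOrder.Language.{u, v}) [L.IsRelational]
    (A : Type w) [L.Structure A] [Finite A]
    (C : Type w') [L.Structure C] :
    ∃ χ : (A ↪[L] C) → (A ≃[L] A),
      ∀ f : A ↪[L] C,
        Function.Bijective (fun h : A ≃[L] A => χ (f.comp h.toEmbedding)) ∧
          {c : A ≃[L] A | ∃ h : A ↪[L] A, χ (f.comp h) = c}.ncard =
            Nat.card (A ≃[L] A) := by
  classical
  -- the equivalence relation: two embeddings are related if they differ by an automorphism of A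
  set R : (A ↪[L] C) → (A ↪[L] C) → Prop :=
    fun g g' => ∃ h : A ≃[L] A, g.comp h.toEmbedding = g' with hR
  have compemb : ∀ (h h' : A ≃[L] A),
      (h.comp h').toEmbedding = h.toEmbedding.comp h'.toEmbedding := by
    intro h h'; ext x; rfl
  have Requiv : Equivalence R := by
    constructor
    · intro g; exact ⟨FirstOrder.Language.Equiv.refl L A, by ext x; rfl⟩
    · rintro g g' ⟨h, rfl⟩
      refine ⟨h.symm, ?_⟩
      ext x
      simp [Embedding.comp_apply, Equiv.coe_toEmbedding]
    · rintro g g' g'' ⟨h, rfl⟩ ⟨h', rfl⟩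
      exact ⟨h.comp h', by rw [compemb, Embedding.comp_assoc]⟩
  let s : Setoid (A ↪[L] C) := ⟨R, Requiv⟩
  -- representative of each class
  let rep : (A ↪[L] C) → (A ↪[L] C) := fun g => (Quotient.mk s g).out
  have hrep : ∀ g, R (rep g) g := fun g => Quotient.mk_out (s := s) g
  let χ : (A ↪[L] C) → (A ≃[L] A) := fun g => (hrep g).choose
  have hχ : ∀ g, (rep g).comp (χ g).toEmbedding = g := fun g => (hrep g).choose_spec
  have repeq : ∀ (f : A ↪[L] C) (h : A ≃[L] A), rep (f.comp h.toEmbedding) = rep f := by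
    intro f h
    have : Quotient.mk s (f.comp h.toEmbedding) = Quotient.mk s f :=
      Quotient.sound (Requiv.symm ⟨h, rfl⟩)
    simp only [rep, this]
  have cancel : ∀ (g : A ↪[L] C) (e e' : A ≃[L] A),
      g.comp e.toEmbedding = g.comp e'.toEmbedding → e = e' := by
    intro g e e' hee
    ext x
    exact g.injective (congrArg (fun t => t x) hee)
  have key : ∀ (f : A ↪[L] C) (h : A ≃[L] A),
      χ (f.comp h.toEmbedding) = (χ f).comp h := by
    intro f h
    apply cancel (rep f)
    rw [compemb, ← Embedding.comp_assoc, hχ f]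
    have := hχ (f.comp h.toEmbedding)
    rwa [repeq f h] at this
  refine ⟨χ, fun f => ⟨?_, ?_⟩⟩
  · -- bijectivity of h ↦ χ (f ∘ h)
    have : (fun h : A ≃[L] A => χ (f.comp h.toEmbedding)) = fun h => (χ f).comp h := by
      funext h; exact key f h
    rw [this]
    refine Function.bijective_iff_has_inverse.2 ⟨fun h => (χ f).symm.comp h, ?_, ?_⟩
    · intro h; ext x
      simp [Equiv.comp_apply]
    · intro h; ext x
      simp [Equiv.comp_apply]
  · -- the realized colour set is all of Aut(A)
    have hset : {c : A ≃[L] A | ∃ h : A ↪[L] A, χ (f.comp h) = c} = Set.univ := by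
      ext c
      simp only [Set.mem_setOf_eq, Set.mem_univ, iff_true]
      -- surjectivity: take h = (χ f).symm.comp c
      refine ⟨((χ f).symm.comp c).toEmbedding, ?_⟩
      rw [key f]
      ext x
      simp [Equiv.comp_apply]
    rw [hset, Set.ncard_univ]
end

section
/- Let τ be a relational signature and let 𝒞 be a class of finite τ-structures that is closed under isomorphism and has the joint embedding property. If 𝒞 has the Ramsey property, then 𝒞 has the amalgamation property: for all A, B₁, B₂ ∈ 𝒞 with embeddings eᵢ of A into Bᵢ for i ∈ {1,2}, there exist C ∈ 𝒞 and embeddings fᵢ of Bᵢ into C such that f₁ ∘ e₁ = f₂ ∘ e₂. -/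
open FirstOrder FirstOrder.Language CategoryTheory

universe u v w

/-- A class of finite structures over a relational signature that is closed under isomorphism,
has the joint embedding property and the Ramsey property also has the amalgamation property. -/
theorem stmt4 (L : FirstOrder.Language.{u, v}) [L.IsRelational]
    (K : Set (Bundled.{w} L.Structure))
    (hfin : ∀ A ∈ K, Finite A)
    (hiso : ∀ A B : Bundled.{w} L.Structure, A ∈ K → Nonempty (A ≃[L] B) → B ∈ K)
    (hjep : ∀ A ∈ K, ∀ B ∈ K, ∃ C ∈ K, Nonempty (A ↪[L] C) ∧ Nonempty (B ↪[L] C))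
    (hram : ∀ A ∈ K, ∀ B ∈ K, ∀ r : ℕ, ∃ C ∈ K, RamseyArrow L C B A r) :
    ∀ (A B₁ B₂ : Bundled.{w} L.Structure), A ∈ K → B₁ ∈ K → B₂ ∈ K →
      ∀ (e₁ : A ↪[L] B₁) (e₂ : A ↪[L] B₂),
        ∃ (C : Bundled.{w} L.Structure) (f₁ : B₁ ↪[L] C) (f₂ : B₂ ↪[L] C),
          C ∈ K ∧ f₁.comp e₁ = f₂.comp e₂ := by
  classical
  intro A B₁ B₂ hA hB₁ hB₂ e₁ e₂
  obtain ⟨D, hD, ⟨g₁⟩, ⟨g₂⟩⟩ := hjep B₁ hB₁ B₂ hB₂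
  obtain ⟨C, hC, hramsey⟩ := hram A hA D hD 2
  set χ : (A ↪[L] C) → Fin 2 :=
    fun e => if ∃ f : B₁ ↪[L] C, f.comp e₁ = e then 0 else 1 with hχ
  obtain ⟨h, hmono⟩ := hramsey χ
  have h0 : χ (h.comp (g₁.comp e₁)) = 0 := by
    rw [hχ]
    simp only
    rw [if_pos ⟨h.comp g₁, (Embedding.comp_assoc e₁ g₁ h).symm⟩]
  have h1 : χ (h.comp (g₂.comp e₂)) = 0 := by
    rw [← h0]
    exact hmono _ _
  rw [hχ] at h1
  simp only at h1
  by_cases hex : ∃ f : B₁ ↪[L] C, f.comp e₁ = h.comp (g₂.comp e₂)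
  · obtain ⟨f, hf⟩ := hex
    exact ⟨C, f, h.comp g₂, hC, by rw [hf, Embedding.comp_assoc]⟩
  · rw [if_neg hex] at h1
    exact absurd h1 (by decide)
end

section
/- Let Γ be a homogeneous structure over a relational signature. Then the following are equivalent: (1) the age of Γ has the Ramsey property; (2) for every finite induced substructure B of Γ and every r ∈ ℕ there exists a finite induced substructure C of Γ such that for every family assigning to each induced substructure A of B a colouring χ_A of the embeddings of A into C with r colours, there exists an embedding e of B into C such that χ_A(e ∘ e₁) = χ_A(e ∘ e₂) for every induced substructure A of B and all embeddings e₁, e₂ of A into B. -/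
open FirstOrder FirstOrder.Language CategoryTheory

universe u v w

/-- `Γ` is homogeneous: any isomorphism between finite induced substructures (equivalently,
any two embeddings of a finite structure into `Γ`) extends to (differs by) an automorphism. -/
def IsHomogeneous (L : FirstOrder.Language.{u, v}) (Γ : Type w) [L.Structure Γ] : Prop :=
  ∀ A : Bundled.{w} L.Structure, Finite A → ∀ f g : A ↪[L] Γ,
    ∃ α : Γ ≃[L] Γ, ∀ a : A, α (f a) = g a

/-! (1) ⇒ (2): applying the Ramsey property once for each of the finitely many substructures
`A ≤ B`, each time with the previous witness in the role of `B`, yields a single finite structure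
in the age stabilising all colourings at once; it is isomorphic to a finite substructure of `Γ`.

(2) ⇒ (1): embed `B` into `Γ` and colour every substructure isomorphic to `A` by transporting the
given colouring, with one spare colour for all other substructures. For `e₁ e₂ : A ↪ B`, the
image `A₀` of `e₁` is such a copy, and `e₁, e₂` composed with `A₀ ≃ A` are embeddings `A₀ ↪ B`. -/

variable {L : FirstOrder.Language.{u, v}}

theorem RamseyArrow.of_equiv {A B B' C : Type w} [L.Structure A] [L.Structure B]
    [L.Structure B'] [L.Structure C] {r : ℕ} (φ : B ≃[L] B') (h : RamseyArrow L C B' A r) :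
    RamseyArrow L C B A r := by
  intro χ
  obtain ⟨f, hf⟩ := h χ
  refine ⟨f.comp φ.toEmbedding, fun e₁ e₂ => ?_⟩
  simpa only [Embedding.comp_assoc] using hf (φ.toEmbedding.comp e₁) (φ.toEmbedding.comp e₂)

theorem HasRamseyProperty.exists_forall_mem_finset {K : Set (Bundled.{w} L.Structure)}
    (hK : HasRamseyProperty L K) {ι : Type*} (A : ι → Bundled.{w} L.Structure) (s : Finset ι)
    (hs : ∀ i ∈ s, A i ∈ K) {D : Bundled.{w} L.Structure} (hD : D ∈ K) (r : ℕ) :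
    ∃ C ∈ K, ∀ χ : (i : ι) → (A i ↪[L] C) → Fin r, ∃ f : D ↪[L] C,
      ∀ i ∈ s, ∀ e₁ e₂ : A i ↪[L] D, χ i (f.comp e₁) = χ i (f.comp e₂) := by
  classical
  induction s using Finset.induction_on with
  | empty => exact ⟨D, hD, fun _ => ⟨Embedding.refl L D, by simp⟩⟩
  | insert i₀ s _ ih =>
    obtain ⟨C, hC, hCs⟩ := ih fun i hi => hs i (Finset.mem_insert_of_mem hi)
    obtain ⟨C', hC', hC'C⟩ := hK _ (hs i₀ (Finset.mem_insert_self _ _)) C hC r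
    refine ⟨C', hC', fun χ => ?_⟩
    obtain ⟨g, hg⟩ := hC'C (χ i₀)
    obtain ⟨f, hf⟩ := hCs fun i u => χ i (g.comp u)
    refine ⟨g.comp f, fun i hi e₁ e₂ => ?_⟩
    simp only [Embedding.comp_assoc]
    rcases Finset.mem_insert.1 hi with rfl | hi
    · exact hg _ _
    · exact hf i hi e₁ e₂

namespace FirstOrder.Language.Substructure

variable {Γ : Type w} [L.Structure Γ]

theorem finite_setOf_le {B : L.Substructure Γ} (hB : Finite B) :
    {A : L.Substructure Γ | A ≤ B}.Finite :=
  (Set.toFinite (B : Set Γ)).finite_subsets.preimage SetLike.coe_injective.injOn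

theorem mem_finAge_of_finite {S : L.Substructure Γ} (hS : Finite S) :
    (⟨S, inferInstance⟩ : Bundled.{w} L.Structure) ∈ FinAge L Γ :=
  ⟨hS, ⟨S.subtype⟩⟩

end FirstOrder.Language.Substructure

variable {Γ : Type w} [L.Structure Γ]

theorem exists_substructure_equiv_of_mem_finAge {M : Bundled.{w} L.Structure}
    (hM : M ∈ FinAge L Γ) : ∃ S : L.Substructure Γ, Finite S ∧ Nonempty (M ≃[L] S) := by
  obtain ⟨hfin, ⟨ι⟩⟩ := hM
  exact ⟨ι.toHom.range, Finite.of_equiv M ι.equivRange.toEquiv, ⟨ι.equivRange⟩⟩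

theorem ramseyArrow_of_forall_substructure {A : Type w} [L.Structure A]
    {B C : L.Substructure Γ} {r : ℕ}
    (h : ∀ χ : (A' : L.Substructure Γ) → (A' ↪[L] C) → Fin (r + 1), ∃ e : B ↪[L] C,
      ∀ A' : L.Substructure Γ, A' ≤ B →
        ∀ e₁ e₂ : A' ↪[L] B, χ A' (e.comp e₁) = χ A' (e.comp e₂)) :
    RamseyArrow L C B A r := by
  classical
  intro χ
  obtain ⟨e, he⟩ := h fun A' g =>
    if hA' : Nonempty (A ≃[L] A') then (χ (g.comp hA'.some.toEmbedding)).castSucc else Fin.last r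
  refine ⟨e, fun e₁ e₂ => ?_⟩
  set A₀ := (B.subtype.comp e₁).toHom.range
  have hA₀ : Nonempty (A ≃[L] A₀) := ⟨(B.subtype.comp e₁).equivRange⟩
  have hA₀B : A₀ ≤ B := by
    rintro _ hx
    obtain ⟨a, rfl⟩ := Hom.mem_range.1 hx
    exact (e₁ a).2
  have hcomp : ∀ k : A ↪[L] B,
      (e.comp (k.comp hA₀.some.symm.toEmbedding)).comp hA₀.some.toEmbedding = e.comp k := by
    intro k
    ext a
    simp
  have := he A₀ hA₀B (e₁.comp hA₀.some.symm.toEmbedding)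
    (e₂.comp hA₀.some.symm.toEmbedding)
  simp only [dif_pos hA₀, hcomp] at this
  exact Fin.castSucc_injective r this

theorem stmt5_general (L : FirstOrder.Language.{u, v})
    (Γ : Type w) [L.Structure Γ] :
    HasRamseyProperty L (FinAge L Γ) ↔
      ∀ B : L.Substructure Γ, Finite B → ∀ r : ℕ,
        ∃ C : L.Substructure Γ, Finite C ∧
          ∀ χ : (A : L.Substructure Γ) → (A ↪[L] C) → Fin r,
            ∃ e : B ↪[L] C,
              ∀ A : L.Substructure Γ, A ≤ B →
                ∀ e₁ e₂ : A ↪[L] B, χ A (e.comp e₁) = χ A (e.comp e₂) := by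
  constructor
  · intro hRam B hB r
    have hsub := Substructure.finite_setOf_le hB
    obtain ⟨C, hC, hCB⟩ := hRam.exists_forall_mem_finset
      (fun S : L.Substructure Γ => ⟨S, inferInstance⟩) hsub.toFinset
      (fun S hS => Substructure.mem_finAge_of_finite
        (Finite.Set.subset (B : Set Γ) (by simpa using hS)))
      (Substructure.mem_finAge_of_finite hB) r
    obtain ⟨C', hC', ⟨φ⟩⟩ := exists_substructure_equiv_of_mem_finAge hC
    refine ⟨C', hC', fun χ => ?_⟩
    obtain ⟨f, hf⟩ := hCB fun S u => χ S (φ.toEmbedding.comp u)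
    refine ⟨φ.toEmbedding.comp f, fun S hSB e₁ e₂ => ?_⟩
    simpa only [Embedding.comp_assoc] using hf S (by simpa using hSB) e₁ e₂
  · intro h A _ B hB r
    obtain ⟨B', hB', ⟨φ⟩⟩ := exists_substructure_equiv_of_mem_finAge hB
    obtain ⟨C, hC, hCB'⟩ := h B' hB' (r + 1)
    exact ⟨⟨C, inferInstance⟩, Substructure.mem_finAge_of_finite hC,
      (ramseyArrow_of_forall_substructure hCB').of_equiv φ⟩

/-- For a homogeneous structure `Γ` over a relational signature, the age of `Γ` is Ramsey iff
one can simultaneously stabilise colourings of the copies of all substructures `A` of a given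
finite substructure `B` inside some finite substructure `C` of `Γ`. -/
theorem stmt5 (L : FirstOrder.Language.{u, v}) [L.IsRelational]
    (Γ : Type w) [L.Structure Γ] (hΓ : IsHomogeneous L Γ) :
    HasRamseyProperty L (FinAge L Γ) ↔
      ∀ B : L.Substructure Γ, Finite B → ∀ r : ℕ,
        ∃ C : L.Substructure Γ, Finite C ∧
          ∀ χ : (A : L.Substructure Γ) → (A ↪[L] C) → Fin r,
            ∃ e : B ↪[L] C,
              ∀ A : L.Substructure Γ, A ≤ B →
                ∀ e₁ e₂ : A ↪[L] B, χ A (e.comp e₁) = χ A (e.comp e₂) :=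
  stmt5_general L Γ
end

section
/- Let Γ be a countable homogeneous structure over a relational signature whose age has the Ramsey property. Then there exists a linear order on the domain of Γ that is preserved by every automorphism of Γ. -/
open FirstOrder FirstOrder.Language CategoryTheory

universe u v w

/-!
Colour each copy of a finite `A` inside `C` by the order it inherits from a linear order on `C`;
the Ramsey property yields a copy of `B` in `C` on which all copies of `A` are ordered alike.
Iterating over finitely many `A`, every finite `F ⊆ Γ` carries a linear order in which any two
copies of the same substructure on at most two points are ordered alike. The ultralimit of these
orders, along an ultrafilter on the finite subsets of `Γ` refining `atTop`, is a linear order on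
`Γ`, and an automorphism preserves it because it carries the substructure on `{x, y}` to another
copy of it.
-/

section Ultralimit

variable {ι α : Type*} (U : Ultrafilter ι) (s : ι → Set α) (R : ∀ i, s i → s i → Prop)

def ultralimitRel (x y : α) : Prop :=
  ∀ᶠ i in U, ∃ (hx : x ∈ s i) (hy : y ∈ s i), R i ⟨x, hx⟩ ⟨y, hy⟩

variable {U s R}

theorem isLinearOrder_ultralimitRel (hs : ∀ x, ∀ᶠ i in U, x ∈ s i)
    (hR : ∀ i, IsLinearOrder (s i) (R i)) : IsLinearOrder α (ultralimitRel U s R) where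
  refl x := (hs x).mono fun i hx => ⟨hx, hx, (hR i).refl _⟩
  trans x y z hxy hyz := by
    filter_upwards [hxy, hyz] with i ⟨hx, _, h₁⟩ ⟨_, hz, h₂⟩
    exact ⟨hx, hz, (hR i).trans _ _ _ h₁ h₂⟩
  antisymm x y hxy hyx := by
    obtain ⟨i, ⟨_, _, h₁⟩, ⟨_, _, h₂⟩⟩ := (hxy.and hyx).exists
    exact congrArg Subtype.val ((hR i).antisymm _ _ h₁ h₂)
  total x y := by
    refine or_iff_not_imp_left.2 fun hxy => ?_
    filter_upwards [hs x, hs y, Ultrafilter.eventually_not.2 hxy] with i hx hy hnot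
    exact ⟨hy, hx, ((hR i).total ⟨x, hx⟩ ⟨y, hy⟩).resolve_left fun h => hnot ⟨hx, hy, h⟩⟩

end Ultralimit

def IsCanonicalFor (L : FirstOrder.Language.{u, v}) (A : Type*) {B : Type*} [L.Structure A]
    [L.Structure B] (q : B → B → Prop) : Prop :=
  ∀ e₁ e₂ : A ↪[L] B, ⇑e₁ ⁻¹'o q = ⇑e₂ ⁻¹'o q

section Ramsey

variable {L : FirstOrder.Language.{u, v}}

theorem IsCanonicalFor.comap {A B C : Type*} [L.Structure A] [L.Structure B] [L.Structure C]
    {q : C → C → Prop} (hq : IsCanonicalFor L A q) (f : B ↪[L] C) :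
    IsCanonicalFor L A (⇑f ⁻¹'o q) :=
  fun e₁ e₂ => hq (f.comp e₁) (f.comp e₂)

theorem RamseyArrow.exists_forall_comp_eq {A B C : Type w} [L.Structure A] [L.Structure B]
    [L.Structure C] {X : Type*} [Finite X] (h : RamseyArrow L C B A (Nat.card X))
    (χ : (A ↪[L] C) → X) : ∃ f : B ↪[L] C, ∀ e₁ e₂ : A ↪[L] B, χ (f.comp e₁) = χ (f.comp e₂) := by
  obtain ⟨f, hf⟩ := h (Finite.equivFin X ∘ χ)
  exact ⟨f, fun e₁ e₂ => (Finite.equivFin X).injective (hf e₁ e₂)⟩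

theorem RamseyArrow.exists_isCanonicalFor_comap {A B C : Type w} [L.Structure A]
    [L.Structure B] [L.Structure C] [Finite A] (h : RamseyArrow L C B A (Nat.card (A → A → Prop)))
    (q : C → C → Prop) : ∃ f : B ↪[L] C, IsCanonicalFor L A (⇑f ⁻¹'o q) :=
  h.exists_forall_comp_eq fun e => ⇑e ⁻¹'o q

theorem HasRamseyProperty.exists_isLinearOrder_isCanonicalFor
    {K : Set (Bundled.{w} L.Structure)} (hK : HasRamseyProperty L K)
    {S : Set (Bundled.{w} L.Structure)} (hS : S.Finite) (hSK : S ⊆ K)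
    (hSfin : ∀ A ∈ S, Finite A) {B : Bundled.{w} L.Structure} (hB : B ∈ K) :
    ∃ q : B → B → Prop, IsLinearOrder B q ∧ ∀ A ∈ S, IsCanonicalFor L A q := by
  induction S, hS using Set.Finite.induction_on generalizing B with
  | empty =>
    let _ := IsWellOrder.linearOrder (WellOrderingRel (α := B))
    exact ⟨(· ≤ ·), inferInstance, by simp⟩
  | @insert A S _ _ ih =>
    have := hSfin A (Set.mem_insert _ _)
    obtain ⟨C, hC, hCB⟩ := hK A (hSK (Set.mem_insert _ _)) B hB (Nat.card (A → A → Prop))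
    obtain ⟨q, hq_lin, hq_can⟩ :=
      ih ((Set.subset_insert _ _).trans hSK)
        (fun A' hA' => hSfin A' (Set.mem_insert_of_mem _ hA')) hC
    obtain ⟨f, hf⟩ := hCB.exists_isCanonicalFor_comap q
    refine ⟨⇑f ⁻¹'o q, (RelEmbedding.preimage ⟨f, f.injective⟩ q).isLinearOrder, ?_⟩
    rintro A' (rfl | hA')
    · exact hf
    · exact (hq_can A' hA').comap f

end Ramsey

section Substructures

variable {L : FirstOrder.Language.{u, v}} {M : Type w} [L.Structure M]

open Substructure

theorem mem_finAge_of_finite (S : L.Substructure M) (hS : (S : Set M).Finite) :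
    Bundled.of (c := L.Structure) S ∈ FinAge L M :=
  ⟨hS.to_subtype, ⟨S.subtype⟩⟩

theorem IsCanonicalFor.rel_map_iff {S T : L.Substructure M} {q : T → T → Prop}
    (hq : IsCanonicalFor L S q) (hST : S ≤ T) (α : M ≃[L] M) (hα : ∀ x ∈ S, α x ∈ T)
    {x y : M} (hx : x ∈ S) (hy : y ∈ S) :
    q ⟨x, hST hx⟩ ⟨y, hST hy⟩ ↔ q ⟨α x, hα x hx⟩ ⟨α y, hα y hy⟩ :=
  Iff.of_eq (congrFun₂ (hq (inclusion hST)
    ((α.toEmbedding.comp S.subtype).codRestrict T fun z => hα z z.2)) ⟨x, hx⟩ ⟨y, hy⟩)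

theorem mem_finAge_closure [L.IsRelational] {s : Set M} (hs : s.Finite) :
    Bundled.of (c := L.Structure) (closure L s) ∈ FinAge L M :=
  mem_finAge_of_finite _ (by simpa using hs)

end Substructures

open Filter Substructure

theorem stmt6_general (L : FirstOrder.Language.{u, v}) [L.IsRelational]
    (Γ : Type w) [L.Structure Γ]
    (hram : HasRamseyProperty L (FinAge L Γ)) :
    ∃ r : Γ → Γ → Prop, IsLinearOrder Γ r ∧
      ∀ (α : Γ ≃[L] Γ) (x y : Γ), r x y → r (α x) (α y) := by
  let pairs (F : Finset Γ) : Set (Bundled.{w} L.Structure) :=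
    (fun p : Γ × Γ => Bundled.of (closure L {p.1, p.2})) '' (↑F ×ˢ ↑F)
  have pairs_subset (F : Finset Γ) : pairs F ⊆ FinAge L Γ := by
    rintro _ ⟨p, -, rfl⟩
    exact mem_finAge_closure (Set.toFinite _)
  choose q hq_lin hq_can using fun F : Finset Γ =>
    hram.exists_isLinearOrder_isCanonicalFor ((F.finite_toSet.prod F.finite_toSet).image _)
      (pairs_subset F) (fun A hA => (pairs_subset F hA).1) (mem_finAge_closure F.finite_toSet)
  let U : Ultrafilter (Finset Γ) := .of atTop
  have hU (x : Γ) : ∀ᶠ F : Finset Γ in U, x ∈ closure L (F : Set Γ) :=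
    Ultrafilter.of_le _ ((eventually_ge_atTop {x}).mono fun F hF => by simpa using hF)
  refine ⟨ultralimitRel U (fun F => closure L (F : Set Γ)) q,
    isLinearOrder_ultralimitRel hU hq_lin, fun α x y hxy => ?_⟩
  filter_upwards [hxy, hU (α x), hU (α y)] with F ⟨hx, hy, h⟩ hαx hαy
  have hpair : Bundled.of (c := L.Structure) (closure L {x, y}) ∈ pairs F :=
    ⟨(x, y), ⟨by simpa using hx, by simpa using hy⟩, rfl⟩
  have hmaps : ∀ z ∈ closure L {x, y}, α z ∈ closure L (F : Set Γ) := by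
    intro z hz
    rcases (mem_closure_iff_of_isRelational L _ z).1 hz with rfl | rfl <;> assumption
  have hsub : closure L {x, y} ≤ closure L (F : Set Γ) :=
    closure_le.2 (Set.insert_subset hx (Set.singleton_subset_iff.2 hy))
  exact ⟨hαx, hαy, ((hq_can F _ hpair).rel_map_iff hsub α hmaps
    (subset_closure (Set.mem_insert x _)) (subset_closure (Set.mem_insert_of_mem x rfl))).1 h⟩

/-- A countable homogeneous structure over a relational signature whose age has the Ramsey
property carries a linear order preserved by all of its automorphisms. -/
theorem stmt6 (L : FirstOrder.Language.{u, v}) [L.IsRelational]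
    (Γ : Type w) [L.Structure Γ] [Countable Γ]
    (hΓ : IsHomogeneous L Γ) (hram : HasRamseyProperty L (FinAge L Γ)) :
    ∃ r : Γ → Γ → Prop, IsLinearOrder Γ r ∧
      ∀ (α : Γ ≃[L] Γ) (x y : Γ), r x y → r (α x) (α y) :=
  stmt6_general L Γ hram
end

section
/- Let Γ be a homogeneous structure over a relational signature τ whose age has the Ramsey property, and let d₁, …, dₙ be elements of Γ. Let Γ* = (Γ, d₁, …, dₙ) be the expansion of Γ to the signature τ ∪ {c₁, …, cₙ} in which the constant symbol cᵢ is interpreted as dᵢ. Then for all finite substructures A*, B* of Γ* (substructures in the expanded signature contain all the dᵢ, and embeddings fix the constants) and every r ∈ ℕ, we have Γ* → (B*)^{A*}_r; hence Γ* is Ramsey. -/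
open FirstOrder FirstOrder.Language CategoryTheory

/-!
Let `D` be the substructure formed by the constants; it is finite, and since the signature is
relational it is just `{d₁, …, dₙ}`. Homogeneity yields, for every embedding `g` of `A` into `Γ`,
an automorphism moving `g(D)` back onto `D` pointwise; composing with it "straightens" `g` into
an embedding fixing the constants, and the straightening of `f ∘ e` only depends on `f` when `e`
fixes `D`. So one colours all embeddings of `A` by the colour of their straightening, applies the
Ramsey property of the age to get a monochromatic copy `f` of `B`, and straightens `f`.
-/

universe u v w

/-- Composition of pointed embeddings (embeddings of substructures of `Γ` that fix the
distinguished constants `d₁, …, dₙ`). -/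
def pComp {L : FirstOrder.Language.{u, v}} {Γ : Type w} [L.Structure Γ]
    {n : ℕ} {d : Fin n → Γ} {A B : L.Substructure Γ}
    {hdA : ∀ i, d i ∈ A} {hdB : ∀ i, d i ∈ B}
    (f : {f : B ↪[L] Γ // ∀ i, f ⟨d i, hdB i⟩ = d i})
    (e : {e : A ↪[L] B // ∀ i, (e ⟨d i, hdA i⟩ : Γ) = d i}) :
    {g : A ↪[L] Γ // ∀ i, g ⟨d i, hdA i⟩ = d i} :=
  ⟨f.1.comp e.1, fun i => by
    have h : e.1 ⟨d i, hdA i⟩ = ⟨d i, hdB i⟩ := Subtype.ext (e.2 i)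
    rw [Embedding.comp_apply, h]
    exact f.2 i⟩

variable {L : FirstOrder.Language.{u, v}} {Γ : Type w} [L.Structure Γ]

theorem RamseyArrow.of_embedding_s7 {C C' B A : Type w} [L.Structure C] [L.Structure C']
    [L.Structure B] [L.Structure A] {r : ℕ} (h : C ↪[L] C') (hC : RamseyArrow L C B A r) :
    RamseyArrow L C' B A r := by
  intro χ
  obtain ⟨f, hf⟩ := hC fun e => χ (h.comp e)
  exact ⟨h.comp f, hf⟩

theorem HasRamseyProperty.ramseyArrow (hram : HasRamseyProperty L (FinAge L Γ))
    {A B : Bundled.{w} L.Structure} (hA : A ∈ FinAge L Γ) (hB : B ∈ FinAge L Γ) (r : ℕ) :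
    RamseyArrow L Γ B A r := by
  obtain ⟨C, ⟨-, ⟨h⟩⟩, hC⟩ := hram A hA B hB r
  exact hC.of_embedding_s7 h

theorem Substructure.mem_finAge {S : L.Substructure Γ} (hS : Finite S) :
    Bundled.of (c := L.Structure) S ∈ FinAge L Γ :=
  ⟨hS, ⟨S.subtype⟩⟩

namespace IsHomogeneous

variable (hhom : IsHomogeneous L Γ) {D : L.Substructure Γ} (hD : Finite D)
include hhom hD

theorem exists_equiv_comp_eq_subtype (g : D ↪[L] Γ) :
    ∃ α : Γ ≃[L] Γ, α.toEmbedding.comp g = D.subtype := by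
  obtain ⟨α, hα⟩ := hhom (Bundled.of D) hD g D.subtype
  exact ⟨α, Embedding.ext hα⟩

noncomputable def straighten {A : L.Substructure Γ} (hDA : D ≤ A) (e : A ↪[L] Γ) : A ↪[L] Γ :=
  (hhom.exists_equiv_comp_eq_subtype hD (e.comp (Substructure.inclusion hDA))).choose.toEmbedding.comp
    e

theorem straighten_comp_inclusion {A : L.Substructure Γ} (hDA : D ≤ A) (e : A ↪[L] Γ) :
    (hhom.straighten hD hDA e).comp (Substructure.inclusion hDA) = D.subtype := by
  rw [straighten, Embedding.comp_assoc]
  exact (hhom.exists_equiv_comp_eq_subtype hD _).choose_spec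

theorem straighten_comp {A B : L.Substructure Γ} (hDA : D ≤ A) (hDB : D ≤ B)
    (f : B ↪[L] Γ) {e : A ↪[L] B}
    (he : e.comp (Substructure.inclusion hDA) = Substructure.inclusion hDB) :
    hhom.straighten hD hDA (f.comp e) = (hhom.straighten hD hDB f).comp e := by
  have hrestrict : (f.comp e).comp (Substructure.inclusion hDA) =
      f.comp (Substructure.inclusion hDB) := by
    rw [Embedding.comp_assoc, he]
  simp only [straighten, hrestrict, Embedding.comp_assoc]

theorem exists_ramsey_fixing (hram : HasRamseyProperty L (FinAge L Γ))
    {A B : L.Substructure Γ} (hA : Finite A) (hB : Finite B) (hDA : D ≤ A) (hDB : D ≤ B)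
    {r : ℕ} (χ : (A ↪[L] Γ) → Fin r) :
    ∃ f : B ↪[L] Γ, f.comp (Substructure.inclusion hDB) = D.subtype ∧
      ∀ e₁ e₂ : A ↪[L] B, e₁.comp (Substructure.inclusion hDA) = Substructure.inclusion hDB →
        e₂.comp (Substructure.inclusion hDA) = Substructure.inclusion hDB →
          χ (f.comp e₁) = χ (f.comp e₂) := by
  obtain ⟨f, hf⟩ := hram.ramseyArrow (Substructure.mem_finAge hA) (Substructure.mem_finAge hB) r
    fun g => χ (hhom.straighten hD hDA g)
  refine ⟨hhom.straighten hD hDB f, hhom.straighten_comp_inclusion hD hDB f, ?_⟩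
  intro e₁ e₂ he₁ he₂
  rw [← hhom.straighten_comp hD hDA hDB f he₁, ← hhom.straighten_comp hD hDA hDB f he₂]
  exact hf e₁ e₂

end IsHomogeneous

/-- If `Γ` is homogeneous Ramsey and `d₁, …, dₙ ∈ Γ`, then the expansion `(Γ, d₁, …, dₙ)` by
constants is again Ramsey: substructures in the expanded signature contain all `dᵢ` and
embeddings fix them pointwise. -/
theorem stmt7 (L : FirstOrder.Language.{u, v}) [L.IsRelational]
    (Γ : Type w) [L.Structure Γ]
    (hhom : IsHomogeneous L Γ) (hram : HasRamseyProperty L (FinAge L Γ))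
    (n : ℕ) (d : Fin n → Γ) (A B : L.Substructure Γ)
    (hAfin : Finite A) (hBfin : Finite B)
    (hdA : ∀ i, d i ∈ A) (hdB : ∀ i, d i ∈ B) (r : ℕ)
    (χ : {g : A ↪[L] Γ // ∀ i, g ⟨d i, hdA i⟩ = d i} → Fin r) :
    ∃ f : {f : B ↪[L] Γ // ∀ i, f ⟨d i, hdB i⟩ = d i},
      ∀ e₁ e₂ : {e : A ↪[L] B // ∀ i, (e ⟨d i, hdA i⟩ : Γ) = d i},
        χ (pComp f e₁) = χ (pComp f e₂) := by
  classical
  let D := Substructure.closure L (Set.range d)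
  have hD : Finite D := by
    change Finite (D : Set Γ)
    rw [Substructure.closure_eq_of_isRelational]
    exact Set.finite_range d
  have hdD : ∀ i, d i ∈ D := fun i => Substructure.subset_closure ⟨i, rfl⟩
  have hDA : D ≤ A := Substructure.closure_le.mpr (Set.range_subset_iff.mpr hdA)
  have hDB : D ≤ B := Substructure.closure_le.mpr (Set.range_subset_iff.mpr hdB)
  have hfixD (e : {e : A ↪[L] B // ∀ i, (e ⟨d i, hdA i⟩ : Γ) = d i}) :
      e.1.comp (Substructure.inclusion hDA) = Substructure.inclusion hDB := by
    ext ⟨x, hx⟩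
    obtain ⟨i, rfl⟩ := (Substructure.mem_closure_iff_of_isRelational L _ x).mp hx
    exact e.2 i
  -- the fallback colour is never used: `f ∘ e` fixes the constants
  let χ' : (A ↪[L] Γ) → Fin r := fun g =>
    if hg : ∀ i, g ⟨d i, hdA i⟩ = d i then χ ⟨g, hg⟩ else χ ⟨A.subtype, fun _ => rfl⟩
  obtain ⟨f, hfD, hf⟩ := hhom.exists_ramsey_fixing hD hram hAfin hBfin hDA hDB χ'
  let F : {f : B ↪[L] Γ // ∀ i, f ⟨d i, hdB i⟩ = d i} :=
    ⟨f, fun i => DFunLike.congr_fun hfD ⟨d i, hdD i⟩⟩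
  have hχ' (e : {e : A ↪[L] B // ∀ i, (e ⟨d i, hdA i⟩ : Γ) = d i}) :
      χ' (f.comp e.1) = χ (pComp F e) :=
    dif_pos (pComp F e).2
  refine ⟨F, fun e₁ e₂ => ?_⟩
  rw [← hχ', ← hχ']
  exact hf e₁ e₂ (hfixD e₁) (hfixD e₂)
end

section
/- Let τ₁ and τ₂ be disjoint relational signatures and let 𝒞₁ and 𝒞₂ be classes of finite τ₁-structures and finite τ₂-structures, respectively, each closed under isomorphism and induced substructures and having the strong amalgamation property. Then the free superposition 𝒞₁ * 𝒞₂, i.e. the class of finite (τ₁ ∪ τ₂)-structures whose τᵢ-reduct lies in 𝒞ᵢ for i = 1, 2, has the strong amalgamation property. -/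
/-
Amalgamate the `τ₁`-reducts strongly in `D₁ ∈ 𝒞₁` and the `τ₂`-reducts strongly in `D₂ ∈ 𝒞₂`.
In a strong amalgam, `b₁ ∈ B₁` and `b₂ ∈ B₂` are identified exactly when they come from a common
point of `A`, so `B₁ ⊔ B₂` has the same kernel in `D₁` as in `D₂` and its two images are in
canonical bijection. The image in `D₁`, with the `τ₂`-relations transported from the image in `D₂`,
is the amalgam: its `τ₁`-reduct is a substructure of `D₁` and its `τ₂`-reduct is isomorphic to a
substructure of `D₂` (every subset is a substructure, the signatures being relational).
-/

open FirstOrder FirstOrder.Language CategoryTheory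

universe u v u' v' w

/-- The `τ₁`-reduct of a structure in the disjoint union signature `τ₁ ∪ τ₂`. -/
def reductL {L₁ : FirstOrder.Language.{u, v}} {L₂ : FirstOrder.Language.{u', v'}}
    (M : Bundled.{w} (L₁.sum L₂).Structure) : Bundled.{w} L₁.Structure :=
  ⟨M, (LHom.sumInl : L₁ →ᴸ L₁.sum L₂).reduct M⟩

/-- The `τ₂`-reduct of a structure in the disjoint union signature `τ₁ ∪ τ₂`. -/
def reductR {L₁ : FirstOrder.Language.{u, v}} {L₂ : FirstOrder.Language.{u', v'}}
    (M : Bundled.{w} (L₁.sum L₂).Structure) : Bundled.{w} L₂.Structure :=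
  ⟨M, (LHom.sumInr : L₂ →ᴸ L₁.sum L₂).reduct M⟩

/-- The free superposition `𝒞₁ * 𝒞₂`: the class of structures in the disjoint union signature
whose `τᵢ`-reduct lies in `𝒞ᵢ`. -/
def Superposition (L₁ : FirstOrder.Language.{u, v}) (L₂ : FirstOrder.Language.{u', v'})
    (C₁ : Set (Bundled.{w} L₁.Structure)) (C₂ : Set (Bundled.{w} L₂.Structure)) :
    Set (Bundled.{w} (L₁.sum L₂).Structure) :=
  {M | reductL M ∈ C₁ ∧ reductR M ∈ C₂}

/-- The strong amalgamation property for a class of structures. -/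
def StrongAmalgamation (L : FirstOrder.Language.{u, v})
    (K : Set (Bundled.{w} L.Structure)) : Prop :=
  ∀ (A B₁ B₂ : Bundled.{w} L.Structure), A ∈ K → B₁ ∈ K → B₂ ∈ K →
    ∀ (e₁ : A ↪[L] B₁) (e₂ : A ↪[L] B₂),
      ∃ (C : Bundled.{w} L.Structure) (f₁ : B₁ ↪[L] C) (f₂ : B₂ ↪[L] C),
        C ∈ K ∧ f₁.comp e₁ = f₂.comp e₂ ∧
          Set.range ⇑f₁ ∩ Set.range ⇑f₂ = Set.range ⇑(f₁.comp e₁)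

section StrongAmalgam

open Function Set

variable {A B₁ B₂ C D : Type*} {e₁ : A → B₁} {e₂ : A → B₂} {f₁ : B₁ → C} {f₂ : B₂ → C}

def IsStrongAmalgam (e₁ : A → B₁) (e₂ : A → B₂) (f₁ : B₁ → C) (f₂ : B₂ → C) : Prop :=
  f₁ ∘ e₁ = f₂ ∘ e₂ ∧ range f₁ ∩ range f₂ = range (f₁ ∘ e₁)

namespace IsStrongAmalgam

theorem eq_iff (h : IsStrongAmalgam e₁ e₂ f₁ f₂) (hf₁ : Injective f₁)
    (hf₂ : Injective f₂) (b₁ : B₁) (b₂ : B₂) : f₁ b₁ = f₂ b₂ ↔ ∃ a, e₁ a = b₁ ∧ e₂ a = b₂ := by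
  constructor
  · intro hb
    obtain ⟨a, ha⟩ : f₁ b₁ ∈ range (f₁ ∘ e₁) := h.2 ▸ ⟨⟨b₁, rfl⟩, ⟨b₂, hb.symm⟩⟩
    refine ⟨a, hf₁ ha, hf₂ ?_⟩
    rw [← hb, ← ha]
    exact (congrFun h.1 a).symm
  · rintro ⟨a, rfl, rfl⟩
    exact congrFun h.1 a

theorem ker_sumElim_eq {g₁ : B₁ → D} {g₂ : B₂ → D} (hf : IsStrongAmalgam e₁ e₂ f₁ f₂)
    (hg : IsStrongAmalgam e₁ e₂ g₁ g₂) (hf₁ : Injective f₁) (hf₂ : Injective f₂)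
    (hg₁ : Injective g₁) (hg₂ : Injective g₂) :
    Setoid.ker (Sum.elim f₁ f₂) = Setoid.ker (Sum.elim g₁ g₂) := by
  ext (b | b) (b' | b')
  · exact hf₁.eq_iff.trans hg₁.eq_iff.symm
  · exact (hf.eq_iff hf₁ hf₂ b b').trans (hg.eq_iff hg₁ hg₂ b b').symm
  · exact eq_comm.trans <| (hf.eq_iff hf₁ hf₂ b' b).trans <|
      (hg.eq_iff hg₁ hg₂ b' b).symm.trans eq_comm
  · exact hf₂.eq_iff.trans hg₂.eq_iff.symm

theorem of_comp {j : C → D} (hj : Injective j)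
    (h : IsStrongAmalgam e₁ e₂ (j ∘ f₁) (j ∘ f₂)) : IsStrongAmalgam e₁ e₂ f₁ f₂ := by
  refine ⟨hj.comp_left h.1, image_injective.2 hj ?_⟩
  rw [image_inter hj, ← range_comp, ← range_comp, ← range_comp]
  exact h.2

end IsStrongAmalgam

theorem FirstOrder.Language.Embedding.isStrongAmalgam_iff {L : Language} [L.Structure A]
    [L.Structure B₁] [L.Structure B₂] [L.Structure C] (e₁ : A ↪[L] B₁) (e₂ : A ↪[L] B₂)
    (f₁ : B₁ ↪[L] C) (f₂ : B₂ ↪[L] C) :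
    (f₁.comp e₁ = f₂.comp e₂ ∧ range f₁ ∩ range f₂ = range (f₁.comp e₁)) ↔
      IsStrongAmalgam e₁ e₂ f₁ f₂ :=
  and_congr_left' DFunLike.coe_injective.eq_iff.symm

end StrongAmalgam

noncomputable def Setoid.equivOfKerEq {X Y₁ Y₂ : Type*} {p₁ : X → Y₁} {p₂ : X → Y₂}
    (hp₁ : Function.Surjective p₁) (hp₂ : Function.Surjective p₂)
    (h : Setoid.ker p₁ = Setoid.ker p₂) : Y₁ ≃ Y₂ :=
  (Setoid.quotientKerEquivOfSurjective p₁ hp₁).symm.trans <|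
    (Quotient.congrRight fun _ _ => by rw [h]).trans
      (Setoid.quotientKerEquivOfSurjective p₂ hp₂)

theorem Setoid.equivOfKerEq_apply {X Y₁ Y₂ : Type*} {p₁ : X → Y₁} {p₂ : X → Y₂}
    (hp₁ : Function.Surjective p₁) (hp₂ : Function.Surjective p₂)
    (h : Setoid.ker p₁ = Setoid.ker p₂) (x : X) :
    Setoid.equivOfKerEq hp₁ hp₂ h (p₁ x) = p₂ x := by
  have hx : (quotientKerEquivOfSurjective p₁ hp₁).symm (p₁ x) = ⟦x⟧ :=
    (Equiv.symm_apply_eq _).2 rfl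
  simp only [equivOfKerEq, Equiv.trans_apply, hx]
  rfl

namespace FirstOrder.Language

variable {L₁ : Language.{u, v}} {L₂ : Language.{u', v'}}

namespace Embedding

variable {M N : Bundled.{w} (L₁.sum L₂).Structure}

def toReductL (f : M ↪[L₁.sum L₂] N) : reductL M ↪[L₁] reductL N where
  toFun := f
  inj' := f.injective
  map_fun' F x := f.map_fun (Sum.inl F) x
  map_rel' r x := f.map_rel (Sum.inl r) x

def toReductR (f : M ↪[L₁.sum L₂] N) : reductR M ↪[L₂] reductR N where
  toFun := f
  inj' := f.injective
  map_fun' F x := f.map_fun (Sum.inr F) x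
  map_rel' r x := f.map_rel (Sum.inr r) x

def ofReducts (f₁ : reductL M ↪[L₁] reductL N) (f₂ : reductR M ↪[L₂] reductR N)
    (h : ∀ x, f₁ x = f₂ x) : M ↪[L₁.sum L₂] N where
  toFun := f₁
  inj' := f₁.injective
  map_fun' := by
    rintro n (F | F) x
    · exact f₁.map_fun F x
    · have e : ⇑f₁ ∘ x = ⇑f₂ ∘ x := funext fun i => h (x i)
      exact (h _).trans ((f₂.map_fun F x).trans (congrArg _ e.symm))
  map_rel' := by
    rintro n (r | r) x
    · exact f₁.map_rel r x
    · have e : (⇑f₁ ∘ x : Fin n → reductR N) = ⇑f₂ ∘ x := funext fun i => h (x i)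
      exact (iff_of_eq (congrArg (Structure.RelMap (M := reductR N) r) e)).trans
        (f₂.map_rel r x)

end Embedding

open Set Substructure

section JointImage

variable {X M : Type*}

def rangeToClosure (L : Language) [L.Structure M] (q : X → M) : X → closure L (range q) :=
  fun x => ⟨q x, subset_closure (mem_range_self x)⟩

theorem rangeToClosure_surjective (L : Language) [L.IsRelational] [L.Structure M] (q : X → M) :
    Function.Surjective (rangeToClosure L q) := by
  rintro ⟨y, hy⟩
  obtain ⟨x, rfl⟩ := (mem_closure_iff_of_isRelational L _ y).1 hy
  exact ⟨x, rfl⟩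

theorem ker_rangeToClosure (L : Language) [L.Structure M] (q : X → M) :
    Setoid.ker (rangeToClosure L q) = Setoid.ker q :=
  Setoid.ext fun _ _ => Subtype.ext_iff

variable {M₁ M₂ : Type w} [L₁.IsRelational] [L₂.IsRelational] [L₁.Structure M₁]
  [L₂.Structure M₂] {q₁ : X → M₁} {q₂ : X → M₂} (h : Setoid.ker q₁ = Setoid.ker q₂)

variable (L₁ L₂)

noncomputable def closureRangeEquiv : closure L₁ (range q₁) ≃ closure L₂ (range q₂) :=
  Setoid.equivOfKerEq (rangeToClosure_surjective L₁ q₁) (rangeToClosure_surjective L₂ q₂) <| by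
    rw [ker_rangeToClosure, ker_rangeToClosure, h]

theorem closureRangeEquiv_apply (x : X) :
    closureRangeEquiv L₁ L₂ h (rangeToClosure L₁ q₁ x) = rangeToClosure L₂ q₂ x :=
  Setoid.equivOfKerEq_apply _ _ _ x

noncomputable def jointImage : Bundled.{w} (L₁.sum L₂).Structure :=
  letI : L₂.Structure (closure L₁ (range q₁)) := (closureRangeEquiv L₁ L₂ h).symm.inducedStructure
  ⟨closure L₁ (range q₁), sumStructure L₁ L₂ _⟩

noncomputable def reductREquivJointImage :
    reductR (jointImage L₁ L₂ h) ≃[L₂] closure L₂ (range q₂) :=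
  letI : L₂.Structure (closure L₁ (range q₁)) := (closureRangeEquiv L₁ L₂ h).symm.inducedStructure
  (closureRangeEquiv L₁ L₂ h).symm.inducedStructureEquiv.symm

variable {L₁ L₂}

noncomputable def embeddingJointImage {B : Bundled.{w} (L₁.sum L₂).Structure} (φ : B → X)
    (f₁ : reductL B ↪[L₁] M₁) (f₂ : reductR B ↪[L₂] M₂) (hf₁ : ∀ b, f₁ b = q₁ (φ b))
    (hf₂ : ∀ b, f₂ b = q₂ (φ b)) : B ↪[L₁.sum L₂] jointImage L₁ L₂ h :=
  Embedding.ofReducts (f₁.codRestrict _ fun b => hf₁ b ▸ (rangeToClosure L₁ q₁ (φ b)).2)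
    ((reductREquivJointImage L₁ L₂ h).symm.toEmbedding.comp
      (f₂.codRestrict _ fun b => hf₂ b ▸ (rangeToClosure L₂ q₂ (φ b)).2)) <| by
    intro b
    change (⟨f₁ b, _⟩ : closure L₁ (range q₁)) = (closureRangeEquiv L₁ L₂ h).symm ⟨f₂ b, _⟩
    rw [Equiv.eq_symm_apply]
    convert closureRangeEquiv_apply L₁ L₂ h (φ b) using 2
    · exact Subtype.ext (hf₁ b)
    · exact hf₂ b

end JointImage

end FirstOrder.Language

theorem stmt10_general (L₁ : FirstOrder.Language.{u, v}) (L₂ : FirstOrder.Language.{u', v'})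
    [L₁.IsRelational] [L₂.IsRelational]
    (C₁ : Set (Bundled.{w} L₁.Structure)) (C₂ : Set (Bundled.{w} L₂.Structure))
    (hiso₂ : ∀ A B : Bundled.{w} L₂.Structure, A ∈ C₂ → Nonempty (A ≃[L₂] B) → B ∈ C₂)
    (hsub₁ : ∀ M : Bundled.{w} L₁.Structure, M ∈ C₁ →
      ∀ S : L₁.Substructure M, (⟨S, inferInstance⟩ : Bundled.{w} L₁.Structure) ∈ C₁)
    (hsub₂ : ∀ M : Bundled.{w} L₂.Structure, M ∈ C₂ →
      ∀ S : L₂.Substructure M, (⟨S, inferInstance⟩ : Bundled.{w} L₂.Structure) ∈ C₂)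
    (hsa₁ : StrongAmalgamation L₁ C₁) (hsa₂ : StrongAmalgamation L₂ C₂) :
    StrongAmalgamation (L₁.sum L₂) (Superposition L₁ L₂ C₁ C₂) := by
  rintro A B₁ B₂ ⟨hA₁, hA₂⟩ ⟨hB₁₁, hB₁₂⟩ ⟨hB₂₁, hB₂₂⟩ e₁ e₂
  obtain ⟨D₁, g₁, g₂, hD₁, hg⟩ :=
    hsa₁ _ _ _ hA₁ hB₁₁ hB₂₁ e₁.toReductL e₂.toReductL
  obtain ⟨D₂, k₁, k₂, hD₂, hk⟩ :=
    hsa₂ _ _ _ hA₂ hB₁₂ hB₂₂ e₁.toReductR e₂.toReductR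
  rw [Embedding.isStrongAmalgam_iff] at hg hk
  have hker : Setoid.ker (Sum.elim g₁ g₂) = Setoid.ker (Sum.elim k₁ k₂) :=
    hg.ker_sumElim_eq hk g₁.injective g₂.injective k₁.injective k₂.injective
  let f₁ := embeddingJointImage hker Sum.inl g₁ k₁ (fun _ => rfl) (fun _ => rfl)
  let f₂ := embeddingJointImage hker Sum.inr g₂ k₂ (fun _ => rfl) (fun _ => rfl)
  refine ⟨jointImage L₁ L₂ hker, f₁, f₂, ⟨hsub₁ D₁ hD₁ _, ?_⟩, ?_⟩
  · exact hiso₂ _ _ (hsub₂ D₂ hD₂ _) ⟨(reductREquivJointImage L₁ L₂ hker).symm⟩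
  · rw [Embedding.isStrongAmalgam_iff]
    exact IsStrongAmalgam.of_comp (f₁ := f₁) (f₂ := f₂) Subtype.val_injective hg

/-- If `𝒞₁` and `𝒞₂` are classes of finite structures over disjoint relational signatures,
each closed under isomorphism and induced substructures and with the strong amalgamation
property, then their free superposition `𝒞₁ * 𝒞₂` has the strong amalgamation property. -/
theorem stmt10 (L₁ : FirstOrder.Language.{u, v}) (L₂ : FirstOrder.Language.{u', v'})
    [L₁.IsRelational] [L₂.IsRelational]
    (C₁ : Set (Bundled.{w} L₁.Structure)) (C₂ : Set (Bundled.{w} L₂.Structure))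
    (hfin₁ : ∀ A ∈ C₁, Finite A) (hfin₂ : ∀ A ∈ C₂, Finite A)
    (hiso₁ : ∀ A B : Bundled.{w} L₁.Structure, A ∈ C₁ → Nonempty (A ≃[L₁] B) → B ∈ C₁)
    (hiso₂ : ∀ A B : Bundled.{w} L₂.Structure, A ∈ C₂ → Nonempty (A ≃[L₂] B) → B ∈ C₂)
    (hsub₁ : ∀ M : Bundled.{w} L₁.Structure, M ∈ C₁ →
      ∀ S : L₁.Substructure M, (⟨S, inferInstance⟩ : Bundled.{w} L₁.Structure) ∈ C₁)
    (hsub₂ : ∀ M : Bundled.{w} L₂.Structure, M ∈ C₂ →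
      ∀ S : L₂.Substructure M, (⟨S, inferInstance⟩ : Bundled.{w} L₂.Structure) ∈ C₂)
    (hsa₁ : StrongAmalgamation L₁ C₁) (hsa₂ : StrongAmalgamation L₂ C₂) :
    StrongAmalgamation (L₁.sum L₂) (Superposition L₁ L₂ C₁ C₂) :=
  stmt10_general L₁ L₂ C₁ C₂ hiso₂ hsub₁ hsub₂ hsa₁ hsa₂
end

section
/- Fix a relational signature τ and n ∈ ℕ. Let A be an n-partite transversal, let B be an arbitrary n-partite structure, and let r ∈ ℕ. Then there exists an n-partite structure C such that C → (B)^A_r, where the embeddings are embeddings of (τ ∪ {⪯})-structures. -/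
open FirstOrder FirstOrder.Language

universe u v w

/-- An `n`-partite structure: a finite structure over `τ ∪ {⪯}` in which `⪯` is a weak linear
order (total preorder) whose associated equivalence relation has exactly `n` classes. -/
structure PartiteStruct (L : FirstOrder.Language.{u, v}) (n : ℕ) where
  carrier : Type w
  str : L.Structure carrier
  fin : Finite carrier
  rel : carrier → carrier → Prop
  total : ∀ x y, rel x y ∨ rel y x
  trans : ∀ x y z, rel x y → rel y z → rel x z
  levels : ∃ lvl : carrier → Fin n, Function.Surjective lvl ∧
    ∀ x y, lvl x = lvl y ↔ (rel x y ∧ rel y x)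

attribute [instance] PartiteStruct.str

/-- An `n`-partite structure is a transversal if every `≈`-class has exactly one element. -/
def PartiteStruct.IsTransversal {L : FirstOrder.Language.{u, v}} {n : ℕ}
    (A : PartiteStruct.{u, v, w} L n) : Prop :=
  ∀ x y, A.rel x y → A.rel y x → x = y

/-- Embeddings of `n`-partite structures: embeddings of `(τ ∪ {⪯})`-structures, i.e. `τ`-
embeddings preserving `⪯` in both directions. -/
def PEmb {L : FirstOrder.Language.{u, v}} {n : ℕ}
    (A B : PartiteStruct.{u, v, w} L n) : Type _ :=
  {f : A.carrier ↪[L] B.carrier // ∀ x y, B.rel (f x) (f y) ↔ A.rel x y}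

/-- Composition of embeddings of `n`-partite structures. -/
def PEmb.comp {L : FirstOrder.Language.{u, v}} {n : ℕ}
    {A B C : PartiteStruct.{u, v, w} L n} (g : PEmb B C) (f : PEmb A B) : PEmb A C :=
  ⟨g.1.comp f.1, fun x y => by
    rw [Embedding.comp_apply, Embedding.comp_apply, g.2, f.2]⟩

section Aux

open Combinatorics

namespace PartitePf

variable {L : FirstOrder.Language.{u, v}} [L.IsRelational] {n : ℕ}
variable {A B : PartiteStruct.{u, v, w} L n}
variable (θ : B.carrier → A.carrier) {ι : Type}

/-- The copy of `B` corresponding to a combinatorial line. -/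
def lineMapFn (ℓ : Line (PEmb A B) (Option ι)) (x : B.carrier) (j : Option ι) : B.carrier :=
  (ℓ.idxFun j).elim x fun σ => σ.1 (θ x)

/-- The copy of `A` corresponding to a word. -/
def wordMapFn (ξ : Option ι → PEmb A B) (a : A.carrier) (j : Option ι) : B.carrier :=
  (ξ j).1 a

/-- The structure on the cube. -/
def strC : L.Structure (Option ι → B.carrier) where
  funMap := fun f _ => isEmptyElim f
  RelMap {k} R w :=
    (∃ (ℓ : Line (PEmb A B) (Option ι)) (x : Fin k → B.carrier),
        Structure.RelMap R x ∧ ∀ i, w i = lineMapFn θ ℓ (x i)) ∨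
    (∃ (ξ : Option ι → PEmb A B) (a : Fin k → A.carrier),
        Structure.RelMap R a ∧ ∀ i, w i = wordMapFn ξ (a i))

/-- The partite structure on the cube. -/
def CPart [Fintype ι] : PartiteStruct.{u, v, w} L n where
  carrier := Option ι → B.carrier
  str := strC θ
  fin := by haveI := B.fin; infer_instance
  rel w w' := B.rel (w none) (w' none)
  total w w' := B.total _ _
  trans w w' w'' h h' := B.trans _ _ _ h h'
  levels := by
    obtain ⟨lvl, hs, hl⟩ := B.levels
    refine ⟨fun w => lvl (w none), fun i => ?_, fun w w' => hl _ _⟩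
    obtain ⟨b, hb⟩ := hs i
    exact ⟨fun _ => b, hb⟩

variable (hT1 : ∀ (σ : PEmb A B) a, θ (σ.1 a) = a)
variable (hT2 : ∀ x y, A.rel (θ x) (θ y) ↔ B.rel x y)

include hT1 in
theorem key_line {k : ℕ} (R : L.Relations k) (ℓ : Line (PEmb A B) (Option ι))
    (x : Fin k → B.carrier)
    (h : (∃ (ℓ' : Line (PEmb A B) (Option ι)) (y : Fin k → B.carrier),
        Structure.RelMap R y ∧ ∀ i, lineMapFn θ ℓ (x i) = lineMapFn θ ℓ' (y i)) ∨
      (∃ (ξ : Option ι → PEmb A B) (a : Fin k → A.carrier),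
        Structure.RelMap R a ∧ ∀ i, lineMapFn θ ℓ (x i) = wordMapFn ξ (a i))) :
    Structure.RelMap R x := by
  obtain ⟨j, hj⟩ := ℓ.proper
  rcases h with ⟨ℓ', y, hy, he⟩ | ⟨ξ, a, ha, he⟩
  · obtain ⟨j', hj'⟩ := ℓ'.proper
    have hx : ∀ i, x i = lineMapFn θ ℓ' (y i) j := fun i => by
      have h0 := congrFun (he i) j
      simpa [lineMapFn, hj] using h0
    cases hc : ℓ'.idxFun j with
    | none =>
      have hxy : x = y := funext fun i => by rw [hx i]; simp [lineMapFn, hc]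
      rwa [hxy]
    | some σ =>
      have hxi : ∀ i, x i = σ.1 (θ (y i)) := fun i => by
        rw [hx i]; simp [lineMapFn, hc]
      cases hc' : ℓ.idxFun j' with
      | none =>
        have hxy : x = y := funext fun i => by
          have h0 := congrFun (he i) j'
          simpa [lineMapFn, hc', hj'] using h0
        rwa [hxy]
      | some σ' =>
        have hyi : ∀ i, y i = σ'.1 (θ (x i)) := fun i => by
          have h0 := congrFun (he i) j'
          simp only [lineMapFn, hc', hj', Option.elim] at h0
          exact h0.symm
        have hth : ∀ i, θ (y i) = θ (x i) := fun i => by rw [hyi i, hT1]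
        have h1 : y = ⇑σ'.1 ∘ (fun i => θ (x i)) := funext hyi
        rw [h1, Embedding.map_rel] at hy
        have h2 : x = ⇑σ.1 ∘ (fun i => θ (x i)) := funext fun i => by
          rw [hxi i, hth i]; rfl
        rw [h2, Embedding.map_rel]
        exact hy
  · have hx : ∀ i, x i = (ξ j).1 (a i) := fun i => by
      have h0 := congrFun (he i) j
      simpa [lineMapFn, wordMapFn, hj] using h0
    have h2 : x = ⇑(ξ j).1 ∘ a := funext hx
    rw [h2, Embedding.map_rel]
    exact ha

include hT1 in
theorem key_word {k : ℕ} (R : L.Relations k) (ξ : Option ι → PEmb A B)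
    (a : Fin k → A.carrier)
    (h : (∃ (ℓ' : Line (PEmb A B) (Option ι)) (y : Fin k → B.carrier),
        Structure.RelMap R y ∧ ∀ i, wordMapFn ξ (a i) = lineMapFn θ ℓ' (y i)) ∨
      (∃ (ξ' : Option ι → PEmb A B) (a' : Fin k → A.carrier),
        Structure.RelMap R a' ∧ ∀ i, wordMapFn ξ (a i) = wordMapFn ξ' (a' i))) :
    Structure.RelMap R a := by
  rcases h with ⟨ℓ', y, hy, he⟩ | ⟨ξ', a', ha', he⟩
  · obtain ⟨j', hj'⟩ := ℓ'.proper
    have hyi : ∀ i, y i = (ξ j').1 (a i) := fun i => by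
      have h0 := congrFun (he i) j'
      simp only [lineMapFn, wordMapFn, hj', Option.elim] at h0
      exact h0.symm
    have h1 : y = ⇑(ξ j').1 ∘ a := funext hyi
    rw [h1, Embedding.map_rel] at hy
    exact hy
  · have haa : a = a' := funext fun i => by
      have h0 := congrFun (he i) none
      have h1 : θ ((ξ none).1 (a i)) = θ ((ξ' none).1 (a' i)) := by
        rw [show ((ξ none).1 (a i) : B.carrier) = (ξ' none).1 (a' i) from h0]
      rwa [hT1, hT1] at h1
    rwa [haa]

/-- The copy of `B` along a line, as a partite embedding. -/
def lineEmb [Fintype ι] (ℓ : Line (PEmb A B) (Option ι)) :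
    PEmb B (CPart (A := A) θ (ι := ι)) :=
  ⟨{ toFun := fun x => lineMapFn θ ℓ x
     inj' := by
       obtain ⟨j, hj⟩ := ℓ.proper
       intro x y h
       have h0 := congrFun h j
       simpa [lineMapFn, hj] using h0
     map_fun' := fun f _ => isEmptyElim f
     map_rel' := fun {k} R x => by
       constructor
       · intro h
         exact key_line θ hT1 R ℓ x h
       · intro h
         exact Or.inl ⟨ℓ, x, h, fun i => rfl⟩ },
   fun x y => by
     show B.rel (lineMapFn θ ℓ x none) (lineMapFn θ ℓ y none) ↔ B.rel x y
     cases hc : ℓ.idxFun none with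
     | none => simp [lineMapFn, hc]
     | some σ =>
       simp only [lineMapFn, hc, Option.elim]
       rw [σ.2, hT2]⟩

/-- The copy of `A` along a word, as a partite embedding. -/
def wordEmb [Fintype ι] (ξ : Option ι → PEmb A B) :
    PEmb A (CPart (A := A) θ (ι := ι)) :=
  ⟨{ toFun := fun a => wordMapFn ξ a
     inj' := fun a a' h => (ξ none).1.injective (congrFun h none)
     map_fun' := fun f _ => isEmptyElim f
     map_rel' := fun {k} R a => by
       constructor
       · intro h
         exact key_word θ hT1 R ξ a h
       · intro h
         exact Or.inr ⟨ξ, a, h, fun i => rfl⟩ },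
   fun a a' => by
     show B.rel ((ξ none).1 a) ((ξ none).1 a') ↔ A.rel a a'
     exact (ξ none).2 a a'⟩

theorem lineEmb_comp [Fintype ι] (ℓ : Line (PEmb A B) (Option ι)) (e : PEmb A B) :
    (lineEmb θ hT1 hT2 ℓ).comp e = wordEmb θ hT1 (fun j => (ℓ.idxFun j).getD e) := by
  refine Subtype.ext (Embedding.ext fun a => funext fun j => ?_)
  show lineMapFn θ ℓ (e.1 a) j = wordMapFn (fun j => (ℓ.idxFun j).getD e) a j
  cases hc : ℓ.idxFun j with
  | none => simp [lineMapFn, wordMapFn, hc]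
  | some σ => simp [lineMapFn, wordMapFn, hc, hT1 e a]

end PartitePf

end Aux

/-- The partite lemma (Nešetřil–Rödl): if `A` is an `n`-partite transversal and `B` an
arbitrary `n`-partite structure, then for every number of colours `r` there is an `n`-partite
structure `C` with `C → (B)^A_r`. -/
theorem stmt12 (L : FirstOrder.Language.{u, v}) [L.IsRelational] (n : ℕ)
    (A B : PartiteStruct.{u, v, w} L n) (hA : A.IsTransversal) (r : ℕ) :
    ∃ C : PartiteStruct.{u, v, w} L n,
      ∀ χ : PEmb A C → Fin r, ∃ f : PEmb B C,
        ∀ e₁ e₂ : PEmb A B, χ (f.comp e₁) = χ (f.comp e₂) := by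
  classical
  haveI := A.fin; haveI := B.fin
  by_cases hne : Nonempty (PEmb A B)
  case neg =>
    exact ⟨B, fun χ => ⟨⟨Embedding.refl L B.carrier, fun _ _ => Iff.rfl⟩,
      fun e₁ _ => absurd ⟨e₁⟩ hne⟩⟩
  obtain ⟨σ₀⟩ := hne
  haveI : Finite (A.carrier ↪[L] B.carrier) :=
    Finite.of_injective _ Embedding.coe_injective
  haveI : Finite (PEmb A B) := Subtype.finite
  obtain ⟨lvlA, hlvlAs, hlvlA⟩ := A.levels
  obtain ⟨lvlB, hlvlBs, hlvlB⟩ := B.levels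
  have hlvlAinj : Function.Injective lvlA := fun x y h =>
    hA x y ((hlvlA x y).1 h).1 ((hlvlA x y).1 h).2
  let eA : A.carrier ≃ Fin n := Equiv.ofBijective lvlA ⟨hlvlAinj, hlvlAs⟩
  -- every embedding of `A` meets every class of `B`
  have hmeets : ∀ (σ : PEmb A B) (x : B.carrier),
      ∃ a, B.rel (σ.1 a) x ∧ B.rel x (σ.1 a) := by
    intro σ x
    have hinj : Function.Injective (fun i : Fin n => lvlB (σ.1 (eA.symm i))) := by
      intro i i' h
      have h2 := (hlvlB _ _).1 h
      exact eA.symm.injective (hA _ _ ((σ.2 _ _).1 h2.1) ((σ.2 _ _).1 h2.2))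
    obtain ⟨i, hi⟩ := Finite.injective_iff_surjective.mp hinj (lvlB x)
    refine ⟨eA.symm i, (hlvlB _ _).1 hi⟩
  -- any two embeddings of `A` hit the same classes at the same elements
  have hsame : ∀ a (σ σ' : PEmb A B),
      B.rel (σ.1 a) (σ'.1 a) ∧ B.rel (σ'.1 a) (σ.1 a) := by
    have hwf : WellFounded (fun x y : A.carrier => A.rel x y ∧ ¬ A.rel y x) := by
      haveI : IsTrans A.carrier (fun x y => A.rel x y ∧ ¬ A.rel y x) :=
        ⟨fun x y z hxy hyz => ⟨A.trans _ _ _ hxy.1 hyz.1,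
          fun h => hxy.2 (A.trans _ _ _ hyz.1 h)⟩⟩
      haveI : IsIrrefl A.carrier (fun x y => A.rel x y ∧ ¬ A.rel y x) :=
        ⟨fun x h => h.2 h.1⟩
      exact Finite.wellFounded_of_trans_of_irrefl _
    intro a
    induction a using hwf.induction with
    | _ a IH =>
      have key : ∀ σ σ' : PEmb A B, B.rel (σ.1 a) (σ'.1 a) := by
        intro σ σ'
        by_contra hcon
        have h1 : B.rel (σ'.1 a) (σ.1 a) := (B.total _ _).resolve_left hcon
        obtain ⟨b, hb1, hb2⟩ := hmeets σ (σ'.1 a)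
        have hba : A.rel b a ∧ ¬ A.rel a b := by
          refine ⟨(σ.2 _ _).1 (B.trans _ _ _ hb1 h1), fun hab => ?_⟩
          exact hcon (B.trans _ _ _ ((σ.2 a b).2 hab) hb1)
        have hIH := IH b hba σ σ'
        have e1 : B.rel (σ'.1 b) (σ'.1 a) := B.trans _ _ _ hIH.2 hb1
        have e2 : B.rel (σ'.1 a) (σ'.1 b) := B.trans _ _ _ hb2 hIH.1
        have : b = a := hA _ _ ((σ'.2 _ _).1 e1) ((σ'.2 _ _).1 e2)
        rw [this] at hba
        exact hba.2 hba.1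
      exact fun σ σ' => ⟨key σ σ', key σ' σ⟩
  -- the projection to `A`
  choose θ hθ1 hθ2 using fun x => hmeets σ₀ x
  have hT1 : ∀ (σ : PEmb A B) a, θ (σ.1 a) = a := by
    intro σ a
    have hs := hsame a σ₀ σ
    have e1 : B.rel (σ₀.1 (θ (σ.1 a))) (σ₀.1 a) :=
      B.trans _ _ _ (hθ1 (σ.1 a)) hs.2
    have e2 : B.rel (σ₀.1 a) (σ₀.1 (θ (σ.1 a))) :=
      B.trans _ _ _ hs.1 (hθ2 (σ.1 a))
    exact hA _ _ ((σ₀.2 _ _).1 e1) ((σ₀.2 _ _).1 e2)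
  have hT2 : ∀ x y, A.rel (θ x) (θ y) ↔ B.rel x y := by
    intro x y
    rw [← σ₀.2]
    constructor
    · intro h
      exact B.trans _ _ _ (hθ2 x) (B.trans _ _ _ h (hθ1 y))
    · intro h
      exact B.trans _ _ _ (hθ1 x) (B.trans _ _ _ h (hθ2 y))
  -- Hales–Jewett
  obtain ⟨ι, ιfin, hHJ⟩ :=
    Combinatorics.Line.exists_mono_in_high_dimension (PEmb A B) (Fin r)
  haveI := ιfin
  refine ⟨PartitePf.CPart (A := A) θ (ι := ι), fun χ => ?_⟩
  obtain ⟨l, c, hl⟩ := hHJ fun x =>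
    χ (PartitePf.wordEmb θ hT1 (fun j => j.elim σ₀ x))
  let l' : Combinatorics.Line (PEmb A B) (Option ι) :=
    ⟨fun j => j.elim (some σ₀) l.idxFun, by
      obtain ⟨i, hi⟩ := l.proper
      exact ⟨some i, hi⟩⟩
  refine ⟨PartitePf.lineEmb θ hT1 hT2 l', fun e₁ e₂ => ?_⟩
  have hcomp : ∀ e : PEmb A B,
      χ ((PartitePf.lineEmb θ hT1 hT2 l').comp e) = c := by
    intro e
    rw [PartitePf.lineEmb_comp θ hT1 hT2 l' e]
    have hfun : (fun j => (l'.idxFun j).getD e) =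
        (fun j : Option ι => j.elim σ₀ (l e)) := by
      funext j
      cases j with
      | none => rfl
      | some i => rfl
    rw [hfun]
    exact hl e
  rw [hcomp e₁, hcomp e₂]
end

section
/- Let Γ be a homogeneous structure over a relational signature τ with domain D, and suppose Γ has a homogeneous expansion Γ′ with signature τ ∪ {≺}, where ≺ denotes a linear order, such that the automorphism group of Γ′ is oligomorphic. Then the following are equivalent: (1) the age of Γ′ has the ordering property with respect to ≺; (2) for every finite subset X of D there exists a finite subset Y of D such that for every automorphism β of Γ there exists an automorphism α of Γ′ with α(X) ⊆ β(Y). -/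
open FirstOrder FirstOrder.Language CategoryTheory

universe u v w

/-- `(X, ltX)` belongs to the age of the ordered expansion `(Γ, lt)`: it is finite and admits
an embedding into `Γ` preserving the orders. -/
def InOrdAge (L : FirstOrder.Language.{u, v}) (Γ : Type w) [L.Structure Γ]
    (lt : Γ → Γ → Prop) (X : Bundled.{w} L.Structure) (ltX : X → X → Prop) : Prop :=
  Finite X ∧ ∃ f : X ↪[L] Γ, ∀ x y : X, lt (f x) (f y) ↔ ltX x y

/-- The age of `(Γ, lt)` has the ordering property with respect to `lt`: for every reduct `X`
of a member of the age there is a reduct `Y` such that every ordered expansion of `X` in the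
age embeds into every ordered expansion of `Y` in the age. -/
def OrderingProperty (L : FirstOrder.Language.{u, v}) (Γ : Type w) [L.Structure Γ]
    (lt : Γ → Γ → Prop) : Prop :=
  ∀ X : Bundled.{w} L.Structure, (∃ ltX : X → X → Prop, InOrdAge L Γ lt X ltX) →
    ∃ Y : Bundled.{w} L.Structure, (∃ ltY : Y → Y → Prop, InOrdAge L Γ lt Y ltY) ∧
      ∀ (ltX : X → X → Prop) (ltY : Y → Y → Prop),
        InOrdAge L Γ lt X ltX → InOrdAge L Γ lt Y ltY →
          ∃ f : X ↪[L] Y, ∀ x y : X, ltY (f x) (f y) ↔ ltX x y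

/-- The ordered expansion `(Γ, lt)` is homogeneous. -/
def IsOrdHomogeneous (L : FirstOrder.Language.{u, v}) (Γ : Type w) [L.Structure Γ]
    (lt : Γ → Γ → Prop) : Prop :=
  ∀ (A : Bundled.{w} L.Structure) (ltA : A → A → Prop), Finite A →
    ∀ f g : A ↪[L] Γ, (∀ x y : A, lt (f x) (f y) ↔ ltA x y) →
      (∀ x y : A, lt (g x) (g y) ↔ ltA x y) →
      ∃ α : Γ ≃[L] Γ, (∀ x y : Γ, lt (α x) (α y) ↔ lt x y) ∧ ∀ a : A, α (f a) = g a

/-- The automorphism group of the ordered expansion `(Γ, lt)` is oligomorphic. -/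
def OrdOligomorphic (L : FirstOrder.Language.{u, v}) (Γ : Type w) [L.Structure Γ]
    (lt : Γ → Γ → Prop) : Prop :=
  ∀ n : ℕ, Set.Finite {O : Set (Fin n → Γ) | ∃ t : Fin n → Γ,
    O = {u | ∃ g : Γ ≃[L] Γ, (∀ x y : Γ, lt (g x) (g y) ↔ lt x y) ∧ u = ⇑g ∘ t}}

section Aux

variable (L : FirstOrder.Language.{u, v}) [L.IsRelational] (Γ : Type w) [L.Structure Γ]

/-- The induced structure on a subset of a structure over a relational language. -/
def setStructure (s : Set Γ) : L.Structure s where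
  funMap := fun {_} f _ => isEmptyElim f
  RelMap := fun {_} r v => Structure.RelMap r (fun i => (v i : Γ))

/-- The bundled induced structure on a subset. -/
def setBundled (s : Set Γ) : Bundled.{w} L.Structure :=
  ⟨s, setStructure L Γ s⟩

/-- The inclusion embedding of an induced substructure. -/
def setIncl (s : Set Γ) : (setBundled L Γ s) ↪[L] Γ where
  toFun := fun x => @Subtype.val Γ (· ∈ s) x
  inj' := Subtype.val_injective
  map_fun' := fun {_} f _ => isEmptyElim f
  map_rel' := fun {_} _ _ => Iff.rfl

end Aux

/-- For a homogeneous structure `Γ` with a homogeneous ω-categorical ordered expansion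
`(Γ, lt)`, the age of the expansion has the ordering property with respect to `lt` if and only
if for every finite `X ⊆ Γ` there is a finite `Y ⊆ Γ` such that for every automorphism `β` of
`Γ` some automorphism `α` of `(Γ, lt)` maps `X` into `β(Y)`. -/
theorem stmt16 (L : FirstOrder.Language.{u, v}) [L.IsRelational]
    (Γ : Type w) [L.Structure Γ]
    (lt : Γ → Γ → Prop) (hlt : IsStrictTotalOrder Γ lt)
    (hΓ : IsHomogeneous L Γ) (hΓ' : IsOrdHomogeneous L Γ lt)
    (holig : OrdOligomorphic L Γ lt) :
    OrderingProperty L Γ lt ↔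
      ∀ X : Set Γ, X.Finite → ∃ Y : Set Γ, Y.Finite ∧
        ∀ β : Γ ≃[L] Γ, ∃ α : Γ ≃[L] Γ,
          (∀ x y : Γ, lt (α x) (α y) ↔ lt x y) ∧ α '' X ⊆ β '' Y := by
  constructor
  · -- Ordering property → automorphism condition
    intro hOP X hX
    haveI hXfin : Finite (setBundled L Γ X) := hX.to_subtype
    set ltX : (setBundled L Γ X) → (setBundled L Γ X) → Prop :=
      fun a b => lt (setIncl L Γ X a) (setIncl L Γ X b) with hltX
    have hXage : InOrdAge L Γ lt (setBundled L Γ X) ltX :=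
      ⟨hXfin, setIncl L Γ X, fun _ _ => Iff.rfl⟩
    obtain ⟨Y, ⟨ltY0, hY0⟩, hemb⟩ := hOP (setBundled L Γ X) ⟨ltX, hXage⟩
    obtain ⟨hYfin, fY, _⟩ := hY0
    refine ⟨Set.range fY, Set.finite_range fY, ?_⟩
    intro β
    set ltY' : Y → Y → Prop := fun a b => lt (β (fY a)) (β (fY b)) with hltY'
    have hY'age : InOrdAge L Γ lt Y ltY' :=
      ⟨hYfin, β.toEmbedding.comp fY, fun _ _ => Iff.rfl⟩
    obtain ⟨e, he⟩ := hemb ltX ltY' hXage hY'age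
    set j : (setBundled L Γ X) ↪[L] Γ := (β.toEmbedding.comp fY).comp e with hj
    have hjord : ∀ x y : (setBundled L Γ X), lt (j x) (j y) ↔ ltX x y := fun x y => he x y
    obtain ⟨α, hα, hcomm⟩ :=
      hΓ' (setBundled L Γ X) ltX hXfin (setIncl L Γ X) j (fun _ _ => Iff.rfl) hjord
    refine ⟨α, hα, ?_⟩
    rintro _ ⟨a, ha, rfl⟩
    exact ⟨fY (e ⟨a, ha⟩), ⟨e ⟨a, ha⟩, rfl⟩, (hcomm ⟨a, ha⟩).symm⟩
  · -- automorphism condition → ordering property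
    intro hRHS Xb hex
    obtain ⟨ltX0, hX0⟩ := hex
    haveI hXfin : Finite Xb := hX0.1
    classical
    set S : Set (Xb → Xb → Prop) := {r | InOrdAge L Γ lt Xb r} with hS
    have hchoice : ∀ r : S, ∃ f : Xb ↪[L] Γ, ∀ x y : Xb, lt (f x) (f y) ↔ r.1 x y :=
      fun r => r.2.2
    choose F hF using hchoice
    haveI : Finite S := Set.Finite.to_subtype (Set.toFinite S)
    have hXsetfin : (⋃ r : S, Set.range (F r)).Finite :=
      Set.finite_iUnion (fun r => Set.finite_range (F r))
    obtain ⟨Yset, hYsetfin, hY⟩ := hRHS (⋃ r : S, Set.range (F r)) hXsetfin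
    haveI hYfin : Finite (setBundled L Γ Yset) := hYsetfin.to_subtype
    refine ⟨setBundled L Γ Yset,
      ⟨fun a b => lt (setIncl L Γ Yset a) (setIncl L Γ Yset b),
        ⟨hYfin, setIncl L Γ Yset, fun _ _ => Iff.rfl⟩⟩, ?_⟩
    intro ltX ltY hXage hYage
    have hmemS : ltX ∈ S := hXage
    obtain ⟨_, g, hg⟩ := hYage
    obtain ⟨β, hβ⟩ := hΓ (setBundled L Γ Yset) hYfin (setIncl L Γ Yset) g
    obtain ⟨α, hα, hsub⟩ := hY β
    set F0 : Xb ↪[L] Γ := F ⟨ltX, hmemS⟩ with hF0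
    have hF0ord : ∀ x y : Xb, lt (F0 x) (F0 y) ↔ ltX x y := hF ⟨ltX, hmemS⟩
    have hmem : ∀ x : Xb, ∃ y : (setBundled L Γ Yset), g y = α (F0 x) := by
      intro x
      have h1 : F0 x ∈ ⋃ r : S, Set.range (F r) :=
        Set.mem_iUnion.2 ⟨⟨ltX, hmemS⟩, ⟨x, rfl⟩⟩
      obtain ⟨y, hy, hy2⟩ := hsub ⟨F0 x, h1, rfl⟩
      exact ⟨⟨y, hy⟩, (hβ ⟨y, hy⟩).symm.trans hy2⟩
    choose h hh using hmem
    set K : Xb ↪[L] Γ := β.symm.toEmbedding.comp (α.toEmbedding.comp F0) with hK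
    have hval : ∀ a : Xb, (setIncl L Γ Yset) (h a) = K a := by
      intro a
      apply β.injective
      have h1 : β ((setIncl L Γ Yset) (h a)) = g (h a) := hβ (h a)
      have h2 : β (K a) = α (F0 a) := β.apply_symm_apply (α (F0 a))
      rw [h1, h2, hh]
    have hgh : ∀ a : Xb, g (h a) = α (F0 a) := hh
    refine ⟨⟨⟨h, ?_⟩, ?_, ?_⟩, ?_⟩
    · intro x x' hxx'
      have : α (F0 x) = α (F0 x') := by rw [← hgh, ← hgh, hxx']
      exact F0.injective (α.injective this)
    · intro n f x
      exact isEmptyElim f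
    · intro n r v
      have hfun : (fun i => (setIncl L Γ Yset) (h (v i))) = fun i => K (v i) :=
        funext fun i => hval (v i)
      show Structure.RelMap r (fun i => (setIncl L Γ Yset) (h (v i))) ↔ Structure.RelMap r v
      rw [hfun]
      exact K.map_rel' r v
    · intro x y
      show ltY (h x) (h y) ↔ ltX x y
      rw [← hg (h x) (h y), hgh, hgh, hα, hF0ord]
end

section
/- Let Γ be a homogeneous structure over a relational signature τ with domain D, and let ≺ be a linear order on D such that Γ′ = (Γ, ≺) is homogeneous, has oligomorphic automorphism group, and has age with the Ramsey property. Suppose furthermore that every acyclic orbital of Aut(Γ) is also an orbital of Aut(Γ′). Then the age of Γ′ has the ordering property with respect to ≺. -/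
open FirstOrder FirstOrder.Language CategoryTheory

universe u v w

/-- Composition of order-preserving embeddings. -/
def ordComp {L : FirstOrder.Language.{u, v}} {A B C : Bundled.{w} L.Structure}
    {ltA : A → A → Prop} {ltB : B → B → Prop} {ltC : C → C → Prop}
    (f : {f : B ↪[L] C // ∀ x y : B, ltC (f x) (f y) ↔ ltB x y})
    (e : {e : A ↪[L] B // ∀ x y : A, ltB (e x) (e y) ↔ ltA x y}) :
    {g : A ↪[L] C // ∀ x y : A, ltC (g x) (g y) ↔ ltA x y} :=
  ⟨f.1.comp e.1, fun x y => by
    rw [Embedding.comp_apply, Embedding.comp_apply, f.2, e.2]⟩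

/-- The age of `(Γ, lt)` has the Ramsey property (with ordered embeddings). -/
def OrdRamseyAge (L : FirstOrder.Language.{u, v}) (Γ : Type w) [L.Structure Γ]
    (lt : Γ → Γ → Prop) : Prop :=
  ∀ (A B : Bundled.{w} L.Structure) (ltA : A → A → Prop) (ltB : B → B → Prop),
    InOrdAge L Γ lt A ltA → InOrdAge L Γ lt B ltB → ∀ r : ℕ,
      ∃ (C : Bundled.{w} L.Structure) (ltC : C → C → Prop),
        InOrdAge L Γ lt C ltC ∧
          ∀ χ : {e : A ↪[L] C // ∀ x y : A, ltC (e x) (e y) ↔ ltA x y} → Fin r,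
            ∃ f : {f : B ↪[L] C // ∀ x y : B, ltC (f x) (f y) ↔ ltB x y},
              ∀ e₁ e₂ : {e : A ↪[L] B // ∀ x y : A, ltB (e x) (e y) ↔ ltA x y},
                χ (ordComp f e₁) = χ (ordComp f e₂)

/-- An orbital of `Aut(Γ)`: an orbit of the componentwise action on pairs. -/
def IsOrbital (L : FirstOrder.Language.{u, v}) (Γ : Type w) [L.Structure Γ]
    (O : Set (Γ × Γ)) : Prop :=
  ∃ p : Γ × Γ, O = {q | ∃ g : Γ ≃[L] Γ, q = (g p.1, g p.2)}

/-- An orbital of `Aut(Γ, lt)`. -/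
def IsOrdOrbital (L : FirstOrder.Language.{u, v}) (Γ : Type w) [L.Structure Γ]
    (lt : Γ → Γ → Prop) (O : Set (Γ × Γ)) : Prop :=
  ∃ p : Γ × Γ, O = {q | ∃ g : Γ ≃[L] Γ,
    (∀ x y : Γ, lt (g x) (g y) ↔ lt x y) ∧ q = (g p.1, g p.2)}

/-- `O` contains an `O`-cycle `(u₀,u₁), (u₁,u₂), …, (uₙ,u₀)`. -/
def HasOCycle {Γ : Type w} (O : Set (Γ × Γ)) : Prop :=
  ∃ (n : ℕ) (u : Fin (n + 1) → Γ), ∀ i : Fin (n + 1), (u i, u (i + 1)) ∈ O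

/-!
Fix a finite `X` in the age and a finite `W ⊆ Γ` containing a copy of every ordering of `X`
from the age, together with an `O`-cycle for every cyclic orbital `O` of a pair of such a copy.
Ramsey for two-element substructures yields `Y` such that, for every order `≺'` on `Y`, some
embedding `β : W → Y` is canonical: whether `β` keeps an increasing pair of `W` increasing
depends only on the `Aut(Γ)`-orbital of the pair. Given orderings of `X` and `Y`, realize the
first by `S : X → W`, pull `≺'` back along `β ∘ S` and realize the result by `T : X → W`; then
`β ∘ T` preserves the order. Let `S x < S y`. If `β` keeps this pair increasing, canonicity
passes this on to `(T x, T y)`. Otherwise the orbital `O` of `(S x, S y)` cannot be acyclic: it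
would be an orbital of `Aut(Γ, <)`, containing only increasing pairs, while homogeneity puts
`(β (S x), β (S y))` in it. So `β` goes up along some step of the `O`-cycle in `W`; that step is
decreasing in `Γ`, its reverse lies in the orbital of `(T y, T x)`, and canonicity makes `β`
reverse `(T y, T x)` as well.
-/

open Substructure

section Orbitals

variable (L : FirstOrder.Language.{u, v}) (Γ : Type w) [L.Structure Γ]

def orbital (p : Γ × Γ) : Set (Γ × Γ) := {q | ∃ g : Γ ≃[L] Γ, q = (g p.1, g p.2)}

variable {L Γ}

lemma mem_orbital_self (p : Γ × Γ) : p ∈ orbital L Γ p :=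
  ⟨Language.Equiv.refl L Γ, rfl⟩

lemma orbital_eq_of_mem {p q : Γ × Γ} (h : q ∈ orbital L Γ p) :
    orbital L Γ q = orbital L Γ p := by
  obtain ⟨g, rfl⟩ := h
  ext r
  constructor
  · rintro ⟨g', rfl⟩
    exact ⟨g'.comp g, rfl⟩
  · rintro ⟨g', rfl⟩
    exact ⟨g'.comp g.symm, by simp⟩

lemma orbital_swap (p : Γ × Γ) : orbital L Γ p.swap = Prod.swap ⁻¹' orbital L Γ p := by
  ext ⟨a, b⟩
  simp only [orbital, Set.mem_ofPred_eq, Set.mem_preimage, Prod.swap_prod_mk, Prod.fst_swap,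
    Prod.snd_swap, Prod.mk.injEq]
  exact exists_congr fun _ => and_comm

lemma orbital_swap_eq {p q : Γ × Γ} (h : orbital L Γ p = orbital L Γ q) :
    orbital L Γ p.swap = orbital L Γ q.swap := by
  rw [orbital_swap, orbital_swap, h]

lemma ne_of_mem_orbital {p q : Γ × Γ} (hp : p.1 ≠ p.2) (hq : q ∈ orbital L Γ p) : q.1 ≠ q.2 := by
  obtain ⟨g, rfl⟩ := hq
  exact g.injective.ne hp

lemma IsHomogeneous.orbital_eq (hΓ : IsHomogeneous L Γ) {X : Bundled.{w} L.Structure}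
    [Finite X] (k₁ k₂ : X ↪[L] Γ) (x y : X) :
    orbital L Γ (k₁ x, k₁ y) = orbital L Γ (k₂ x, k₂ y) := by
  obtain ⟨α, hα⟩ := hΓ X inferInstance k₁ k₂
  exact orbital_eq_of_mem ⟨α.symm, by simp [← hα]⟩

lemma lt_of_mem_orbital {lt : Γ → Γ → Prop} {p q : Γ × Γ}
    (hO : IsOrdOrbital L Γ lt (orbital L Γ p)) (hp : lt p.1 p.2) (hq : q ∈ orbital L Γ p) :
    lt q.1 q.2 := by
  obtain ⟨p₀, hp₀⟩ := hO
  rw [hp₀] at hq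
  obtain ⟨g₂, hg₂, rfl⟩ := hq
  obtain ⟨g₁, hg₁, hpg⟩ := hp₀ ▸ mem_orbital_self p
  rw [hpg, hg₁] at hp
  exact (hg₂ _ _).2 hp

end Orbitals

section Cycles

variable {α : Type*}

lemma rel_of_not_rel {r : α → α → Prop} [Std.Trichotomous r] {a b : α}
    (h : ¬ r a b) (hne : a ≠ b) : r b a :=
  ((trichotomous_of r a b).resolve_left h).resolve_left hne

lemma rel_iff_of_mem_pair {β : Type*} {r : α → α → Prop} {s : β → β → Prop}
    [IsStrictOrder α r] [IsStrictOrder β s] {f : α → β} {a b : α} (hab : r a b)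
    (hf : s (f a) (f b)) {x y : α} (hx : x ∈ ({a, b} : Set α)) (hy : y ∈ ({a, b} : Set α)) :
    s (f x) (f y) ↔ r x y := by
  rcases hx with rfl | rfl <;> rcases hy with rfl | rfl
  · exact iff_of_false (irrefl _) (irrefl _)
  · exact iff_of_true hf hab
  · exact iff_of_false (asymm hf) (asymm hab)
  · exact iff_of_false (irrefl _) (irrefl _)

def HasCycleIn (W : Set α) (O : Set (α × α)) : Prop :=
  ∃ (n : ℕ) (u : Fin (n + 1) → α), (∀ i, u i ∈ W) ∧ ∀ i, (u i, u (i + 1)) ∈ O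

lemma HasCycleIn.mono {W W' : Set α} {O : Set (α × α)} (h : HasCycleIn W O) (hW : W ⊆ W') :
    HasCycleIn W' O :=
  let ⟨n, u, huW, hu⟩ := h
  ⟨n, u, fun i => hW (huW i), hu⟩

lemma HasOCycle.exists_finite_hasCycleIn {O : Set (α × α)} (h : HasOCycle O) :
    ∃ W : Set α, W.Finite ∧ HasCycleIn W O :=
  let ⟨n, u, hu⟩ := h
  ⟨Set.range u, Set.finite_range u, n, u, Set.mem_range_self, hu⟩

lemma exists_finite_forall_hasCycleIn {ι : Type*} [Finite ι] (O : ι → Set (α × α)) :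
    ∃ W : Set α, W.Finite ∧ ∀ i, HasOCycle (O i) → HasCycleIn W (O i) := by
  have h : ∀ i, ∃ W : Set α, W.Finite ∧ (HasOCycle (O i) → HasCycleIn W (O i)) := by
    intro i
    by_cases hi : HasOCycle (O i)
    · obtain ⟨W, hW, hc⟩ := hi.exists_finite_hasCycleIn
      exact ⟨W, hW, fun _ => hc⟩
    · exact ⟨∅, Set.finite_empty, fun h => absurd h hi⟩
  choose W hW hc using h
  exact ⟨⋃ i, W i, Set.finite_iUnion hW,
    fun i hi => (hc i hi).mono (Set.subset_iUnion W i)⟩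

open Fin.NatCast in
lemma exists_rel_of_cycle (r : α → α → Prop) [IsStrictTotalOrder α r] {n : ℕ}
    (v : Fin (n + 1) → α) (hv : ∀ i, v i ≠ v (i + 1)) : ∃ i, r (v i) (v (i + 1)) := by
  by_contra! hno
  have hdesc (i : Fin (n + 1)) : r (v (i + 1)) (v i) :=
    rel_of_not_rel (hno i) (hv i)
  have hbelow (j : ℕ) : r (v ((j + 1 : ℕ) : Fin (n + 1))) (v 0) := by
    induction j with
    | zero => simpa using hdesc 0
    | succ j ih => exact trans_of r (by simpa using hdesc ((j + 1 : ℕ) : Fin (n + 1))) ih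
  exact irrefl_of r (v 0) (by simpa using hbelow n)

end Cycles

section Ramsey

variable {L : FirstOrder.Language.{u, v}} {Γ : Type w} [L.Structure Γ] {lt : Γ → Γ → Prop}

abbrev OrdEmbedding (A B : Bundled.{w} L.Structure) (ltA : A → A → Prop) (ltB : B → B → Prop) :=
  {e : A ↪[L] B // ∀ x y : A, ltB (e x) (e y) ↔ ltA x y}

lemma ordComp_assoc {A B C D : Bundled.{w} L.Structure} {ltA : A → A → Prop}
    {ltB : B → B → Prop} {ltC : C → C → Prop} {ltD : D → D → Prop}
    (f : OrdEmbedding C D ltC ltD) (g : OrdEmbedding B C ltB ltC)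
    (h : OrdEmbedding A B ltA ltB) : ordComp (ordComp f g) h = ordComp f (ordComp g h) :=
  rfl

lemma OrdRamseyAge.exists_forall_mem_finset (hram : OrdRamseyAge L Γ lt) {ι : Type*}
    (A : ι → Bundled.{w} L.Structure) (ltA : ∀ i, A i → A i → Prop)
    (hA : ∀ i, InOrdAge L Γ lt (A i) (ltA i)) (r : ℕ) {B : Bundled.{w} L.Structure}
    {ltB : B → B → Prop} (hB : InOrdAge L Γ lt B ltB) (s : Finset ι) :
    ∃ (C : Bundled.{w} L.Structure) (ltC : C → C → Prop), InOrdAge L Γ lt C ltC ∧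
      ∀ χ : ∀ i, OrdEmbedding (A i) C (ltA i) ltC → Fin r,
        ∃ f : OrdEmbedding B C ltB ltC, ∀ i ∈ s, ∀ e₁ e₂ : OrdEmbedding (A i) B (ltA i) ltB,
          χ i (ordComp f e₁) = χ i (ordComp f e₂) := by
  classical
  induction s using Finset.induction_on with
  | empty => exact ⟨B, ltB, hB, fun _ => ⟨⟨Embedding.refl L B, fun _ _ => Iff.rfl⟩, by simp⟩⟩
  | insert i s _ ih =>
    obtain ⟨C₁, ltC₁, hC₁, hχ₁⟩ := ih
    obtain ⟨C, ltC, hC, hχ⟩ := hram (A i) C₁ (ltA i) ltC₁ (hA i) hC₁ r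
    refine ⟨C, ltC, hC, fun χ => ?_⟩
    obtain ⟨f, hf⟩ := hχ (χ i)
    obtain ⟨f₁, hf₁⟩ := hχ₁ fun j e => χ j (ordComp f e)
    refine ⟨ordComp f f₁, fun j hj e₁ e₂ => ?_⟩
    rw [ordComp_assoc, ordComp_assoc]
    rcases Finset.mem_insert.1 hj with rfl | hj
    · exact hf _ _
    · exact hf₁ j hj e₁ e₂

end Ramsey

section Canonical

variable {L : FirstOrder.Language.{u, v}} {Γ : Type w} [L.Structure Γ] (lt : Γ → Γ → Prop)

def IsCanonical (W : Set Γ) {Y : Type*} (β : closure L W → Y) (c : Y → Y → Prop) : Prop :=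
  ∀ a b a' b' : closure L W, lt a b → lt a' b' →
    orbital L Γ (a, b) = orbital L Γ (a', b') → (c (β a) (β b) ↔ c (β a') (β b'))

variable {lt} [L.IsRelational]

lemma inOrdAge_closure {s : Set Γ} (hs : s.Finite) :
    InOrdAge L Γ lt (Bundled.of (closure L s)) (fun a b : closure L s => lt a b) :=
  ⟨((closure_eq_of_isRelational L s).symm ▸ hs).to_subtype, (closure L s).subtype,
    fun _ _ => Iff.rfl⟩

lemma exists_ordEmbedding_closure_pair [IsStrictOrder Γ lt] {W : Set Γ} {a b : Γ}
    (g : Γ ≃[L] Γ) (hab : lt a b) (hg : lt (g a) (g b)) (ha : g a ∈ W) (hb : g b ∈ W) :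
    ∃ e : closure L ({a, b} : Set Γ) ↪[L] closure L W,
      (∀ x y, lt (e x) (e y) ↔ lt x y) ∧ ∀ x, (e x : Γ) = g x := by
  have hmem (x : closure L ({a, b} : Set Γ)) : (x : Γ) ∈ ({a, b} : Set Γ) :=
    (mem_closure_iff_of_isRelational L _ _).1 x.2
  have hW (x : closure L ({a, b} : Set Γ)) : g x ∈ closure L W := by
    rw [mem_closure_iff_of_isRelational]
    rcases hmem x with h | h <;> rw [h]
    exacts [ha, hb]
  exact ⟨(g.toEmbedding.comp (Substructure.closure L _).subtype).codRestrict _ hW,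
    fun x y => rel_iff_of_mem_pair hab hg (hmem x) (hmem y), fun _ => rfl⟩

lemma OrdRamseyAge.exists_isCanonical [IsStrictOrder Γ lt] (hram : OrdRamseyAge L Γ lt)
    {W : Set Γ} (hW : W.Finite) :
    ∃ (Y : Bundled.{w} L.Structure) (ltY : Y → Y → Prop), InOrdAge L Γ lt Y ltY ∧
      ∀ c : Y → Y → Prop, ∃ β : closure L W ↪[L] Y, IsCanonical lt W β c := by
  classical
  have mem₁ (p : Γ × Γ) : p.1 ∈ closure L {p.1, p.2} := subset_closure (Set.mem_insert _ _)
  have mem₂ (p : Γ × Γ) : p.2 ∈ closure L {p.1, p.2} :=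
    subset_closure (Set.mem_insert_of_mem _ rfl)
  obtain ⟨Y, ltY, hY, hmono⟩ := hram.exists_forall_mem_finset
    (fun p : Γ × Γ => Bundled.of (closure L {p.1, p.2})) _
    (fun _ => inOrdAge_closure (Set.toFinite _)) 2 (inOrdAge_closure hW)
    (hW.toFinset ×ˢ hW.toFinset)
  refine ⟨Y, ltY, hY, fun c => ?_⟩
  obtain ⟨β, hβ⟩ := hmono fun p e =>
    finTwoEquiv.symm (decide (c (e.1 ⟨p.1, mem₁ p⟩) (e.1 ⟨p.2, mem₂ p⟩)))
  refine ⟨β.1, fun a b a' b' hab hab' hO => ?_⟩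
  obtain ⟨g, hg⟩ : ((a' : Γ), (b' : Γ)) ∈ orbital L Γ (a, b) := hO ▸ mem_orbital_self _
  simp only [Prod.mk.injEq] at hg
  have haW (x : closure L W) : (x : Γ) ∈ W := (mem_closure_iff_of_isRelational L _ _).1 x.2
  obtain ⟨e₁, he₁, he₁a⟩ := exists_ordEmbedding_closure_pair (Language.Equiv.refl L Γ) hab hab
    (haW a) (haW b)
  obtain ⟨e₂, he₂, he₂a⟩ := exists_ordEmbedding_closure_pair g hab (hg.1 ▸ hg.2 ▸ hab')
    (hg.1 ▸ haW a') (hg.2 ▸ haW b')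
  have hcol := hβ (a, b) (by simp [haW]) ⟨e₁, he₁⟩ ⟨e₂, he₂⟩
  rw [finTwoEquiv.symm.injective.eq_iff, decide_eq_decide] at hcol
  convert hcol using 3 <;> refine congrArg β.1 (Subtype.ext ?_)
  exacts [(he₁a ⟨a, mem₁ (a, b)⟩).symm, (he₁a ⟨b, mem₂ (a, b)⟩).symm,
    hg.1.trans (he₂a ⟨a, mem₁ (a, b)⟩).symm, hg.2.trans (he₂a ⟨b, mem₂ (a, b)⟩).symm]

end Canonical

section Realization

variable {L : FirstOrder.Language.{u, v}} {Γ : Type w} [L.Structure Γ] (lt : Γ → Γ → Prop)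

def RealizesOrderings (X : Bundled.{w} L.Structure) (W : Set Γ) : Prop :=
  ∀ ltX : X → X → Prop, InOrdAge L Γ lt X ltX →
    ∃ f : X ↪[L] closure L W, (∀ x y, lt (f x) (f y) ↔ ltX x y) ∧
      ∀ x y, HasOCycle (orbital L Γ (f x, f y)) → HasCycleIn W (orbital L Γ (f x, f y))

lemma exists_finite_realizesOrderings (X : Bundled.{w} L.Structure) [Finite X] :
    ∃ W : Set Γ, W.Finite ∧ RealizesOrderings lt X W := by
  choose F hF using fun σ : {σ : X → X → Prop // InOrdAge L Γ lt X σ} => σ.2.2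
  obtain ⟨W₁, hW₁, hcyc⟩ := exists_finite_forall_hasCycleIn fun i : _ × X × X =>
    orbital L Γ (F i.1 i.2.1, F i.1 i.2.2)
  refine ⟨(⋃ σ, Set.range (F σ)) ∪ W₁,
    (Set.finite_iUnion fun _ => Set.finite_range _).union hW₁, fun ltX hX => ?_⟩
  have hmem (x : X) : F ⟨ltX, hX⟩ x ∈ closure L ((⋃ σ, Set.range (F σ)) ∪ W₁) :=
    subset_closure (Or.inl (Set.mem_iUnion.2 ⟨_, x, rfl⟩))
  exact ⟨(F ⟨ltX, hX⟩).codRestrict _ hmem, hF _,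
    fun x y h => (hcyc (⟨ltX, hX⟩, x, y) h).mono Set.subset_union_right⟩

end Realization

section Orientation

variable {L : FirstOrder.Language.{u, v}} {Γ : Type w} [L.Structure Γ] {lt : Γ → Γ → Prop}

lemma InOrdAge.isStrictTotalOrder [IsStrictTotalOrder Γ lt] {X : Bundled.{w} L.Structure}
    {ltX : X → X → Prop} (h : InOrdAge L Γ lt X ltX) : IsStrictTotalOrder X ltX :=
  let ⟨_, f, hf⟩ := h
  RelEmbedding.isStrictTotalOrder ⟨⟨f, f.injective⟩, hf _ _⟩

variable [IsStrictTotalOrder Γ lt]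

lemma IsCanonical.or_of_hasCycleIn {W : Set Γ} {k : closure L W → Γ}
    (hk : IsCanonical lt W k lt) (hinj : Function.Injective k) {a b a' b' : closure L W}
    (hab : lt a b) (hab' : lt a' b') (hO : orbital L Γ (a, b) = orbital L Γ (b', a'))
    (hcyc : HasCycleIn W (orbital L Γ (a, b))) :
    lt (k a) (k b) ∨ lt (k b') (k a') := by
  obtain ⟨n, u, huW, hu⟩ := hcyc
  let w (i : Fin (n + 1)) : closure L W := ⟨u i, subset_closure (huW i)⟩
  have hne (i : Fin (n + 1)) : u i ≠ u (i + 1) := ne_of_mem_orbital (ne_of_irrefl hab) (hu i)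
  obtain ⟨i, hi⟩ := exists_rel_of_cycle lt (k ∘ w)
    fun i => hinj.ne fun h => hne i (congrArg Subtype.val h)
  rcases trichotomous_of lt (u i) (u (i + 1)) with h | h | h
  · exact Or.inl ((hk (w i) (w (i + 1)) a b h hab (orbital_eq_of_mem (hu i))).1 hi)
  · exact absurd h (hne i)
  · have hrev := hk (w (i + 1)) (w i) a' b' h hab'
      ((orbital_swap_eq (orbital_eq_of_mem (hu i))).trans (orbital_swap_eq hO))
    exact Or.inr (rel_of_not_rel (fun h' => asymm hi (hrev.2 h'))
      (hinj.ne fun h' => ne_of_irrefl hab' (congrArg Subtype.val h')))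

lemma lt_of_isCanonical (hΓ : IsHomogeneous L Γ)
    (horb : ∀ O : Set (Γ × Γ), IsOrbital L Γ O → ¬ HasOCycle O → IsOrdOrbital L Γ lt O)
    {X : Bundled.{w} L.Structure} [Finite X] {W : Set Γ} (k : closure L W ↪[L] Γ)
    (hk : IsCanonical lt W k lt) (S T : X ↪[L] closure L W)
    (hT : ∀ a b, lt (T a) (T b) ↔ lt (k (S a)) (k (S b))) {x y : X} (hxy : lt (S x) (S y))
    (hcyc : HasOCycle (orbital L Γ (S x, S y)) → HasCycleIn W (orbital L Γ (S x, S y))) :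
    lt (k (T x)) (k (T y)) := by
  have hST : orbital L Γ (S x, S y) = orbital L Γ (T x, T y) :=
    hΓ.orbital_eq ((closure L W).subtype.comp S) ((closure L W).subtype.comp T) x y
  by_cases hS : lt (k (S x)) (k (S y))
  · exact (hk _ _ _ _ hxy ((hT x y).2 hS) hST).1 hS
  have hSyx : lt (k (S y)) (k (S x)) :=
    rel_of_not_rel hS (k.injective.ne fun h => ne_of_irrefl hxy (congrArg Subtype.val h))
  by_cases hc : HasOCycle (orbital L Γ (S x, S y))
  · exact (hk.or_of_hasCycleIn k.injective hxy ((hT y x).2 hSyx) hST (hcyc hc)).resolve_left hS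
  · have hkS : orbital L Γ (S x, S y) = orbital L Γ (k (S x), k (S y)) :=
      hΓ.orbital_eq ((closure L W).subtype.comp S) (k.comp S) x y
    exact (hS (lt_of_mem_orbital (horb _ ⟨_, rfl⟩ hc) hxy
      (hkS.symm ▸ mem_orbital_self (k (S x), k (S y))))).elim

lemma exists_ordEmbedding_of_isCanonical (hΓ : IsHomogeneous L Γ)
    (horb : ∀ O : Set (Γ × Γ), IsOrbital L Γ O → ¬ HasOCycle O → IsOrdOrbital L Γ lt O)
    {X : Bundled.{w} L.Structure} [Finite X] {W : Set Γ} (hW : RealizesOrderings lt X W)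
    (k : closure L W ↪[L] Γ) (hk : IsCanonical lt W k lt) {ltX : X → X → Prop}
    (hX : InOrdAge L Γ lt X ltX) :
    ∃ f : X ↪[L] closure L W, ∀ x y, lt (k (f x)) (k (f y)) ↔ ltX x y := by
  obtain ⟨S, hS, hScyc⟩ := hW ltX hX
  obtain ⟨T, hT, -⟩ := hW (fun x y => lt (k (S x)) (k (S y)))
    ⟨inferInstance, k.comp S, fun _ _ => Iff.rfl⟩
  have := hX.isStrictTotalOrder
  exact ⟨T, fun x y => (RelEmbedding.ofMonotone (r := ltX) (s := lt) (fun x => k (T x))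
    fun x y hxy => lt_of_isCanonical hΓ horb k hk S T hT ((hS x y).2 hxy) (hScyc x y)).map_rel_iff⟩

end Orientation

theorem stmt17_general (L : FirstOrder.Language.{u, v}) [L.IsRelational]
    (Γ : Type w) [L.Structure Γ]
    (lt : Γ → Γ → Prop) (hlt : IsStrictTotalOrder Γ lt)
    (hΓ : IsHomogeneous L Γ)
    (hram : OrdRamseyAge L Γ lt)
    (horb : ∀ O : Set (Γ × Γ), IsOrbital L Γ O → ¬ HasOCycle O → IsOrdOrbital L Γ lt O) :
    OrderingProperty L Γ lt := by
  rintro X ⟨_, hX⟩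
  have : Finite X := hX.1
  obtain ⟨W, hWfin, hW⟩ := exists_finite_realizesOrderings lt X
  obtain ⟨Y, ltY, hY, hcan⟩ := hram.exists_isCanonical hWfin
  refine ⟨Y, ⟨ltY, hY⟩, fun ltX ltY' hltX hltY' => ?_⟩
  obtain ⟨h, hh⟩ := hltY'.2
  obtain ⟨β, hβ⟩ := hcan fun u v => lt (h u) (h v)
  obtain ⟨f, hf⟩ := exists_ordEmbedding_of_isCanonical hΓ horb hW (h.comp β) hβ hltX
  exact ⟨β.comp f, fun x y => (hh _ _).symm.trans (hf x y)⟩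

/-- If `Γ` is homogeneous, `(Γ, lt)` is a homogeneous ω-categorical Ramsey order expansion,
and every acyclic orbital of `Aut(Γ)` is an orbital of `Aut(Γ, lt)`, then the age of `(Γ, lt)`
has the ordering property with respect to `lt`. -/
theorem stmt17 (L : FirstOrder.Language.{u, v}) [L.IsRelational]
    (Γ : Type w) [L.Structure Γ]
    (lt : Γ → Γ → Prop) (hlt : IsStrictTotalOrder Γ lt)
    (hΓ : IsHomogeneous L Γ) (hΓ' : IsOrdHomogeneous L Γ lt)
    (holig : OrdOligomorphic L Γ lt) (hram : OrdRamseyAge L Γ lt)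
    (horb : ∀ O : Set (Γ × Γ), IsOrbital L Γ O → ¬ HasOCycle O → IsOrdOrbital L Γ lt O) :
    OrderingProperty L Γ lt :=
  stmt17_general L Γ lt hlt hΓ hram horb
end

section
/- Let A be the structure with domain {u, v} over the signature {E, <} where E^A = {(u,u),(v,v)} (so u and v are not E-equivalent) and <^A = {(u,v)}, and let B be the structure with domain {a, b, c, d} where <^B is the linear order b < c < a < d and E^B is the equivalence relation with classes {a, b} and {c, d}. Then for every finite structure (C; E, <) in which E is an equivalence relation and < is a linear order, it is not the case that C → (B)^A_2. Hence the class of all finite structures consisting of an equivalence relation together with a linear order does not have the Ramsey property. -/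
/-- Embeddings of finite structures with an equivalence relation `E` and a linear order `<`:
injective maps preserving `E` and `<` in both directions. -/
def EOEmb {α β : Type} (Ea la : α → α → Prop) (Eb lb : β → β → Prop) : Type :=
  {f : α → β // Function.Injective f ∧
    (∀ x y, Eb (f x) (f y) ↔ Ea x y) ∧ (∀ x y, lb (f x) (f y) ↔ la x y)}

/-- Composition of such embeddings. -/
def EOEmb.comp {α β γ : Type} {Ea la : α → α → Prop} {Eb lb : β → β → Prop}
    {Ec lc : γ → γ → Prop} (g : EOEmb Eb lb Ec lc) (f : EOEmb Ea la Eb lb) :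
    EOEmb Ea la Ec lc :=
  ⟨g.1 ∘ f.1, g.2.1.comp f.2.1,
    fun x y => by simp only [Function.comp_apply, g.2.2.1, f.2.2.1],
    fun x y => by simp only [Function.comp_apply, g.2.2.2, f.2.2.2]⟩

/-- The structure `A` with domain `{u, v}` (`u = 0`, `v = 1`): `E^A = {(u,u),(v,v)}`. -/
def EA : Fin 2 → Fin 2 → Prop := fun x y => x = y

/-- `<^A = {(u,v)}`. -/
def ltA : Fin 2 → Fin 2 → Prop := fun x y => x = 0 ∧ y = 1

/-- The structure `B` with domain `{a, b, c, d}` (`a = 0`, `b = 1`, `c = 2`, `d = 3`):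
`E^B` has the classes `{a, b}` and `{c, d}`. -/
def EB : Fin 4 → Fin 4 → Prop := fun x y => x.val / 2 = y.val / 2

/-- The position of each element of `B` in the linear order `b < c < a < d`. -/
def rankB : Fin 4 → ℕ := ![2, 0, 1, 3]

/-- `<^B` is the linear order `b < c < a < d`. -/
def ltB : Fin 4 → Fin 4 → Prop := fun x y => rankB x < rankB y


/-!
Colour an embedding of `A` with image `x < y` by whether the chosen representative of the
`E`-class of `x` lies below the chosen representative of the `E`-class of `y`. Inside any copy
of `B`, the copies `(b, c)` and `(c, a)` of `A` see the same two classes (as `a E b`) in opposite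
roles, so they receive different colours.
-/

def embBC : EOEmb EA ltA EB ltB :=
  ⟨![1, 2], by unfold EA EB ltA ltB rankB; decide⟩

def embCA : EOEmb EA ltA EB ltB :=
  ⟨![2, 0], by unfold EA EB ltA ltB rankB; decide⟩

theorem rel_iff_not_rel_swap_of_ne {α : Type*} (r : α → α → Prop) [IsStrictTotalOrder α r]
    {a b : α} (h : a ≠ b) : r a b ↔ ¬ r b a :=
  ⟨asymm_of r, fun hba => (trichotomous_of r a b).resolve_right (not_or.2 ⟨h, hba⟩)⟩

section ClassColouring

variable {γ : Type} (s : Setoid γ) (lt : γ → γ → Prop)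

open Classical in
noncomputable def classColouring (e : EOEmb EA ltA s.r lt) : Fin 2 :=
  if lt (Quotient.mk s (e.1 0)).out (Quotient.mk s (e.1 1)).out then 0 else 1

theorem classColouring_ne [IsStrictTotalOrder γ lt] {e₁ e₂ : EOEmb EA ltA s.r lt}
    (hmid : e₁.1 1 = e₂.1 0) (hend : s.r (e₁.1 0) (e₂.1 1)) :
    classColouring s lt e₁ ≠ classColouring s lt e₂ := by
  have hclass₀ : Quotient.mk s (e₂.1 1) = Quotient.mk s (e₁.1 0) := (Quotient.sound hend).symm
  have hdistinct : (Quotient.mk s (e₁.1 0)).out ≠ (Quotient.mk s (e₁.1 1)).out := by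
    rw [Ne, Quotient.out_inj, Quotient.eq]
    exact fun h => zero_ne_one ((e₁.2.2.1 0 1).1 h)
  unfold classColouring
  rw [← hmid, hclass₀, rel_iff_not_rel_swap_of_ne lt hdistinct]
  split_ifs <;> decide

end ClassColouring

theorem stmt18_general (γ : Type) (Eg lg : γ → γ → Prop)
    (hE : Equivalence Eg) (hl : IsStrictTotalOrder γ lg) :
    ¬ ∀ χ : EOEmb EA ltA Eg lg → Fin 2,
        ∃ f : EOEmb EB ltB Eg lg,
          ∀ e₁ e₂ : EOEmb EA ltA EB ltB, χ (f.comp e₁) = χ (f.comp e₂) := by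
  intro hRamsey
  let s : Setoid γ := ⟨Eg, hE⟩
  obtain ⟨f, hf⟩ := hRamsey (classColouring s lg)
  have hab : Eg (f.1 1) (f.1 0) := (f.2.2.1 1 0).2 rfl
  exact classColouring_ne s lg rfl hab (hf embBC embCA)

/-- No finite structure `(C; E, <)` with `E` an equivalence relation and `<` a linear order
satisfies `C → (B)^A_2`; hence the class of finite structures consisting of an equivalence
relation with a linear order does not have the Ramsey property. -/
theorem stmt18 (γ : Type) [Finite γ] (Eg lg : γ → γ → Prop)
    (hE : Equivalence Eg) (hl : IsStrictTotalOrder γ lg) :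
    ¬ ∀ χ : EOEmb EA ltA Eg lg → Fin 2,
        ∃ f : EOEmb EB ltB Eg lg,
          ∀ e₁ e₂ : EOEmb EA ltA EB ltB, χ (f.comp e₁) = χ (f.comp e₂) :=
  stmt18_general γ Eg lg hE hl
end
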